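/- arXiv:2408.10736 — 3 statements merged into one kernel-verified Lean document; each statement's English description precedes it below -/
import Mathlib

section
/- Let f₀ : ℝ³ → [0,∞) be smooth, compactly supported in ℝ³∖{0} and not identically zero, let h ∈ ℝ³, and let B ∈ Sym3 be positive definite with A = B⁻¹ and a = det A, satisfying the Fuchsian condition at B (with f = f₀). Define the linear operator N on Sym3 × Sym3 by N(k, Z) = (2k + tr(Bk) A − 2Z, k − χ_B(k) + tr(Bk) Ψ(B) − M_A(k) + Z). Then every eigenvalue λ ∈ ℂ of N has real part strictly greater than 0; if moreover hᵀAh < a/6, then every eigenvalue of N has real part strictly greater than 1. -/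
open MeasureTheory Matrix Real Filter Topology Set Asymptotics

noncomputable section

/-- 3×3 real matrices; symmetric ones form `Sym3`, encoded via `Matrix.IsSymm`/`Matrix.PosDef`. -/
abbrev Mat3 := Matrix (Fin 3) (Fin 3) ℝ

/-- vectors in ℝ³ -/
abbrev Vec3 := Fin 3 → ℝ

/-- Euclidean norm on ℝ³. -/
def enorm3 (p : Vec3) : ℝ := Real.sqrt (∑ i, p i ^ 2)

/-- the quadratic form pᵀBp. -/
def quadForm (B : Mat3) (p : Vec3) : ℝ := p ⬝ᵥ B.mulVec p

/-- Ψ(B)_{ij} = 4π (det B)^{1/2} ∫ (pᵀBp)^{−1/2} p_i p_j f(p) dp. -/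
def PsiM (f : Vec3 → ℝ) (B : Mat3) : Mat3 :=
  Matrix.of fun i j =>
    (4 * π) * Real.sqrt B.det * ∫ p : Vec3, (Real.sqrt (quadForm B p))⁻¹ * (p i * p j * f p)

/-- χ_b(k)_{ij} = 4π (det b)^{1/2} ∫ (pᵀbp)^{−3/2} ((bp)ᵀ k (bp)) p_i p_j f(p) dp. -/
def chiM (f : Vec3 → ℝ) (b : Mat3) (k : Mat3) : Mat3 :=
  Matrix.of fun i j =>
    (4 * π) * Real.sqrt b.det *
      ∫ p : Vec3, ((Real.sqrt (quadForm b p))⁻¹ ^ 3) * (quadForm k (b.mulVec p) * (p i * p j * f p))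

/-- With u = ah, w = kh, α = hᵀah and b = a⁻¹:
M_a(k) = (2/det a)((hᵀkh) a + α k − 2(u wᵀ + w uᵀ) + tr(bk)(2 u uᵀ − α a)). -/
def MM (a : Mat3) (h : Vec3) (k : Mat3) : Mat3 :=
  (2 / a.det) • ((h ⬝ᵥ k.mulVec h) • a + (h ⬝ᵥ a.mulVec h) • k
    - (2:ℝ) • (vecMulVec (a.mulVec h) (k.mulVec h) + vecMulVec (k.mulVec h) (a.mulVec h))
    + (a⁻¹ * k).trace • ((2:ℝ) • vecMulVec (a.mulVec h) (a.mulVec h) - (h ⬝ᵥ a.mulVec h) • a))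

/-- The Fuchsian condition at B (with A = B⁻¹):
2Ψ(B) = A − (2/det A)((hᵀAh) A − 2 (Ah)(Ah)ᵀ). -/
def FuchsCond (f : Vec3 → ℝ) (h : Vec3) (B : Mat3) : Prop :=
  (2:ℝ) • PsiM f B =
    B⁻¹ - (2 / (B⁻¹).det) •
      ((h ⬝ᵥ (B⁻¹).mulVec h) • B⁻¹ - (2:ℝ) • vecMulVec ((B⁻¹).mulVec h) ((B⁻¹).mulVec h))

/-- F(B) = 16π ∫ (pᵀBp)^{1/2} f dp + 2 (det B)^{−1/2} + 4 (det B)^{1/2} hᵀB⁻¹h. -/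
def Ffun (f : Vec3 → ℝ) (h : Vec3) (B : Mat3) : ℝ :=
  16 * π * (∫ p : Vec3, Real.sqrt (quadForm B p) * f p)
    + 2 * (Real.sqrt B.det)⁻¹ + 4 * Real.sqrt B.det * (h ⬝ᵥ (B⁻¹).mulVec h)

/-- First component of N: (k,Z) ↦ 2k + tr(Bk) A − 2Z. -/
def Nfst (A B k Z : Mat3) : Mat3 := (2:ℝ) • k + (B * k).trace • A - (2:ℝ) • Z

/-- Second component of N: (k,Z) ↦ k − χ_B(k) + tr(Bk) Ψ(B) − M_A(k) + Z. -/
def Nsnd (f : Vec3 → ℝ) (hv : Vec3) (A B k Z : Mat3) : Mat3 :=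
  k - chiM f B k + (B * k).trace • PsiM f B - MM A hv k + Z


namespace EV

/-- the pairing tr(BxBy) -/
def tp (B x y : Mat3) : ℝ := (B * x * (B * y)).trace

lemma tp_eq (B x y : Mat3) : tp B x y = ((B * x * B) * y).trace := by
  rw [tp, ← Matrix.mul_assoc]

lemma tp_add (B x y z : Mat3) : tp B x (y + z) = tp B x y + tp B x z := by
  simp [tp, Matrix.mul_add, Matrix.trace_add]

lemma tp_sub (B x y z : Mat3) : tp B x (y - z) = tp B x y - tp B x z := by
  simp [tp, Matrix.mul_sub, Matrix.trace_sub]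

lemma tp_smul (B x : Mat3) (s : ℝ) (y : Mat3) : tp B x (s • y) = s * tp B x y := by
  simp [tp, Matrix.mul_smul, Matrix.trace_smul]

lemma tp_zero (B x : Mat3) : tp B x 0 = 0 := by simp [tp]

lemma tp_zero' (B y : Mat3) : tp B 0 y = 0 := by simp [tp]

lemma tp_comm (B x y : Mat3) : tp B x y = tp B y x := Matrix.trace_mul_comm (B*x) (B*y)

lemma dot_tmul (C : Mat3) (v z : Vec3) : v ⬝ᵥ (Cᵀ *ᵥ z) = (C *ᵥ v) ⬝ᵥ z := by
  rw [Matrix.dotProduct_mulVec, Matrix.vecMul_transpose]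

lemma dot_shift (M : Mat3) (hM : Mᵀ = M) (v z : Vec3) : v ⬝ᵥ (M *ᵥ z) = (M *ᵥ v) ⬝ᵥ z := by
  conv_lhs => rw [← hM]
  exact dot_tmul M v z

lemma trace_mul_vecMulVec (M : Mat3) (u v : Vec3) :
    (M * vecMulVec u v).trace = v ⬝ᵥ (M *ᵥ u) := by
  simp [Matrix.trace, Matrix.diag, Matrix.mul_apply, Matrix.vecMulVec_apply, dotProduct,
    Matrix.mulVec, Fin.sum_univ_three]
  ring

lemma dotProduct_self_pos (v : Vec3) (hv : v ≠ 0) : 0 < v ⬝ᵥ v := by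
  rcases Function.ne_iff.mp hv with ⟨i, hi⟩
  exact Finset.sum_pos' (fun j _ => mul_self_nonneg _) ⟨i, Finset.mem_univ i, mul_self_pos.mpr hi⟩

lemma dotProduct_sq_le (a b : Vec3) : (a ⬝ᵥ b)^2 ≤ (a ⬝ᵥ a) * (b ⬝ᵥ b) := by
  have := Finset.sum_mul_sq_le_sq_mul_sq Finset.univ a b
  simpa [dotProduct, pow_two] using this

section PD
variable {B : Mat3}

lemma Bsymm (hB : B.PosDef) : Bᵀ = B := by
  have := hB.isHermitian
  simpa [Matrix.IsHermitian, Matrix.conjTranspose_eq_transpose_of_trivial] using this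

lemma detB_pos (hB : B.PosDef) : 0 < B.det := hB.det_pos

lemma detB_unit (hB : B.PosDef) : IsUnit B.det := isUnit_iff_ne_zero.mpr hB.det_pos.ne'

lemma hBA (hB : B.PosDef) : B * B⁻¹ = 1 := Matrix.mul_nonsing_inv B (detB_unit hB)

lemma hAB (hB : B.PosDef) : B⁻¹ * B = 1 := Matrix.nonsing_inv_mul B (detB_unit hB)

lemma hAinv (hB : B.PosDef) : (B⁻¹)⁻¹ = B := Matrix.nonsing_inv_nonsing_inv B (detB_unit hB)

lemma hAdet (hB : B.PosDef) : (B⁻¹).det = (B.det)⁻¹ := by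
  rw [Matrix.det_nonsing_inv, Ring.inverse_eq_inv']

lemma hBu (hB : B.PosDef) (h : Vec3) : B *ᵥ (B⁻¹ *ᵥ h) = h := by
  rw [Matrix.mulVec_mulVec, hBA hB, Matrix.one_mulVec]

lemma quadForm_pos (hB : B.PosDef) {p : Vec3} (hp : p ≠ 0) : 0 < quadForm B p := by
  have := hB.dotProduct_mulVec_pos hp
  simpa [quadForm] using this

lemma quadForm_nonneg (hB : B.PosDef) (p : Vec3) : 0 ≤ quadForm B p := by
  have := hB.posSemidef.dotProduct_mulVec_nonneg p
  simpa [quadForm] using this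

lemma exists_sqrtB (hB : B.PosDef) : ∃ C : Mat3, B = Cᵀ * C ∧ IsUnit C.det := by
  open scoped MatrixOrder in
  obtain ⟨C, hC⟩ := CStarAlgebra.nonneg_iff_eq_star_mul_self.mp hB.posSemidef.nonneg
  have hC' : B = Cᵀ * C := by simpa [Matrix.star_eq_conjTranspose, Matrix.conjTranspose_eq_transpose_of_trivial] using hC
  refine ⟨C, hC', isUnit_iff_ne_zero.mpr fun h0 => ?_⟩
  have hd : 0 < B.det := hB.det_pos
  rw [hC'] at hd
  simp [Matrix.det_mul, h0] at hd

/-- positivity of the pairing -/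
lemma tp_pos (hB : B.PosDef) {x : Mat3} (hx : xᵀ = x) (hx0 : x ≠ 0) : 0 < tp B x x := by
  obtain ⟨C, hC, hCu⟩ := exists_sqrtB hB
  have key : tp B x x = ∑ i, ∑ j, (C * x * Cᵀ) i j * (C * x * Cᵀ) i j := by
    have h1 : tp B x x = ((C * x * Cᵀ) * (C * x * Cᵀ)).trace := by
      rw [tp, hC]
      rw [show Cᵀ * C * x * (Cᵀ * C * x) = Cᵀ * (C * x * Cᵀ * (C * x)) by
        simp only [Matrix.mul_assoc]]
      rw [Matrix.trace_mul_comm]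
      simp only [Matrix.mul_assoc]
    have h2 : ((C * x * Cᵀ) * (C * x * Cᵀ)).trace
        = ∑ i, ∑ j, (C * x * Cᵀ) i j * (C * x * Cᵀ) j i := by
      simp [Matrix.trace, Matrix.diag, Matrix.mul_apply]
    have hsymm : (C * x * Cᵀ)ᵀ = C * x * Cᵀ := by
      simp [Matrix.transpose_mul, hx, Matrix.mul_assoc]
    rw [h1, h2]
    refine Finset.sum_congr rfl fun i _ => Finset.sum_congr rfl fun j _ => ?_
    rw [show (C * x * Cᵀ) j i = (C * x * Cᵀ)ᵀ i j from rfl, hsymm]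
  have hm0 : C * x * Cᵀ ≠ 0 := by
    intro h0
    apply hx0
    have hCuM : IsUnit C := (Matrix.isUnit_iff_isUnit_det C).mpr hCu
    have hCuT : IsUnit Cᵀ := (Matrix.isUnit_iff_isUnit_det Cᵀ).mpr (by simpa using hCu)
    calc x = C⁻¹ * (C * x * Cᵀ) * (Cᵀ)⁻¹ := by
            rw [show C⁻¹ * (C * x * Cᵀ) * (Cᵀ)⁻¹ = (C⁻¹ * C) * x * (Cᵀ * (Cᵀ)⁻¹) by
              simp only [Matrix.mul_assoc]]
            rw [Matrix.nonsing_inv_mul C (by simpa using hCu),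
              Matrix.mul_nonsing_inv Cᵀ (by simpa using hCu)]
            simp
      _ = 0 := by rw [h0]; simp
  rw [key]
  have hex : ∃ i j, (C * x * Cᵀ) i j ≠ 0 := by
    by_contra hcon
    push_neg at hcon
    exact hm0 (Matrix.ext fun i j => by simpa using hcon i j)
  obtain ⟨i, j, hij⟩ := hex
  exact Finset.sum_pos' (fun i _ => Finset.sum_nonneg fun j _ => mul_self_nonneg _)
    ⟨i, Finset.mem_univ i, Finset.sum_pos' (fun j _ => mul_self_nonneg _)
      ⟨j, Finset.mem_univ j, mul_self_pos.mpr hij⟩⟩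

end PD
end EV

-- ===================== chunk B =====================
namespace EV
section PD
variable {B : Mat3}

def Sv (B : Mat3) (h : Vec3) (x y : Mat3) : ℝ := (x *ᵥ h) ⬝ᵥ (B *ᵥ (y *ᵥ h))

lemma Sv_comm (hB : B.PosDef) (h : Vec3) (x y : Mat3) : Sv B h x y = Sv B h y x := by
  rw [Sv, dot_shift B (Bsymm hB), dotProduct_comm]; rfl

lemma Sv_nonneg (hB : B.PosDef) (h : Vec3) (x : Mat3) : 0 ≤ Sv B h x x := by
  have := quadForm_nonneg hB (x *ᵥ h); simpa [quadForm, Sv] using this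

lemma tp_inv (hB : B.PosDef) (x : Mat3) : tp B x B⁻¹ = (B*x).trace := by
  rw [tp, hBA hB, Matrix.mul_one]

lemma tp_vmv (B x : Mat3) (u v : Vec3) :
    tp B x (vecMulVec u v) = v ⬝ᵥ ((B * x * B) *ᵥ u) := by
  rw [tp_eq, trace_mul_vecMulVec]

lemma BxB_mulVec (B x : Mat3) (v : Vec3) : (B*x*B) *ᵥ v = B *ᵥ (x *ᵥ (B *ᵥ v)) := by
  simp [Matrix.mulVec_mulVec, Matrix.mul_assoc]

lemma u_dot_B (hB : B.PosDef) (h z : Vec3) : (B⁻¹ *ᵥ h) ⬝ᵥ (B *ᵥ z) = h ⬝ᵥ z := by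
  rw [dot_shift B (Bsymm hB), hBu hB h]

lemma tp_uu (hB : B.PosDef) (h : Vec3) (x : Mat3) :
    tp B x (vecMulVec (B⁻¹*ᵥh) (B⁻¹*ᵥh)) = h ⬝ᵥ (x *ᵥ h) := by
  rw [tp_vmv, BxB_mulVec, hBu hB h, u_dot_B hB]

lemma tp_uw (hB : B.PosDef) (h : Vec3) (x y : Mat3) :
    tp B x (vecMulVec (B⁻¹*ᵥh) (y*ᵥh)) = Sv B h y x := by
  rw [tp_vmv, BxB_mulVec, hBu hB h]; rfl

lemma tp_wu (hB : B.PosDef) (h : Vec3) (x y : Mat3) (hx : xᵀ = x) :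
    tp B x (vecMulVec (y*ᵥh) (B⁻¹*ᵥh)) = Sv B h x y := by
  rw [tp_vmv, BxB_mulVec, u_dot_B hB, dot_shift x hx]; rfl

lemma tp_MM (hB : B.PosDef) (h : Vec3) (x y : Mat3) (hx : xᵀ = x) :
    tp B x (MM B⁻¹ h y) = 2*B.det * ((h ⬝ᵥ (y *ᵥ h)) * (B*x).trace
      + (h ⬝ᵥ (B⁻¹ *ᵥ h)) * tp B x y - 4*Sv B h x y
      + (B*y).trace * (2*(h ⬝ᵥ (x *ᵥ h)) - (h ⬝ᵥ (B⁻¹ *ᵥ h))*(B*x).trace)) := by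
  have hs : 2 / (B⁻¹).det = 2 * B.det := by
    rw [hAdet hB]; field_simp
  rw [MM, hAinv hB, hs]
  rw [tp_smul, tp_add, tp_sub, tp_add, tp_smul, tp_smul, tp_smul, tp_smul, tp_add,
    tp_sub, tp_smul, tp_smul, tp_inv hB, tp_uu hB, tp_uw hB, tp_wu hB h x y hx]
  rw [Sv_comm hB h y x]
  ring

end PD
end EV



-- ===================== chunk C =====================
namespace EV
section PD
variable {B : Mat3} {f₀ : Vec3 → ℝ} {h : Vec3}

lemma Bsplit {C : Mat3} (hC : B = Cᵀ * C) (z : Vec3) : B *ᵥ z = Cᵀ *ᵥ (C *ᵥ z) := by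
  rw [Matrix.mulVec_mulVec, ← hC]

lemma PsiEq (hB : B.PosDef) (hFuchs : FuchsCond f₀ h B) :
    PsiM f₀ B = (1/2 - B.det * (h ⬝ᵥ (B⁻¹ *ᵥ h))) • B⁻¹
      + (2*B.det) • vecMulVec (B⁻¹*ᵥh) (B⁻¹*ᵥh) := by
  have hs : 2 / (B⁻¹).det = 2 * B.det := by rw [hAdet hB]; field_simp
  rw [FuchsCond, hs] at hFuchs
  ext i j
  have := congrFun (congrFun hFuchs i) j
  simp only [Matrix.smul_apply, Matrix.sub_apply, Matrix.add_apply, smul_eq_mul] at this ⊢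
  linarith

lemma tp_Psi (hB : B.PosDef) (hFuchs : FuchsCond f₀ h B) (x : Mat3) :
    tp B x (PsiM f₀ B) = (1/2 - B.det * (h ⬝ᵥ (B⁻¹ *ᵥ h))) * (B*x).trace
      + 2*B.det * (h ⬝ᵥ (x *ᵥ h)) := by
  rw [PsiEq hB hFuchs, tp_add, tp_smul, tp_smul, tp_inv hB, tp_uu hB]

lemma trace_BxBxB_Psi (hB : B.PosDef) (hFuchs : FuchsCond f₀ h B) (x : Mat3) (hx : xᵀ = x) :
    ((B*x*B*x*B) * PsiM f₀ B).trace
      = (1/2 - B.det * (h ⬝ᵥ (B⁻¹ *ᵥ h))) * tp B x x + 2*B.det * Sv B h x x := by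
  have h1 : B*x*B*x*B * B⁻¹ = B*x*(B*x) := by
    rw [Matrix.mul_assoc (B*x*B*x) B B⁻¹, hBA hB, Matrix.mul_one, Matrix.mul_assoc]
  have h2 : ((B*x*B*x*B) * vecMulVec (B⁻¹*ᵥh) (B⁻¹*ᵥh)).trace = Sv B h x x := by
    rw [trace_mul_vecMulVec]
    have hv : (B*x*B*x*B) *ᵥ (B⁻¹ *ᵥ h) = B *ᵥ (x *ᵥ (B *ᵥ (x *ᵥ h))) := by
      rw [Matrix.mulVec_mulVec, Matrix.mul_assoc (B*x*B*x) B B⁻¹, hBA hB, Matrix.mul_one]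
      simp [Matrix.mulVec_mulVec, Matrix.mul_assoc]
    rw [hv, u_dot_B hB, dot_shift x hx]
    rfl
  rw [PsiEq hB hFuchs, Matrix.mul_add, Matrix.mul_smul, Matrix.mul_smul, Matrix.trace_add]
  simp only [Matrix.trace_smul, smul_eq_mul]
  rw [h1, h2]
  simp [tp]

lemma beta_sq_le (hB : B.PosDef) (h : Vec3) (x : Mat3) :
    (h ⬝ᵥ (x *ᵥ h))^2 ≤ (h ⬝ᵥ (B⁻¹ *ᵥ h)) * Sv B h x x := by
  obtain ⟨C, hC, hCu⟩ := exists_sqrtB hB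
  have e1 : h ⬝ᵥ (x *ᵥ h) = (C *ᵥ (B⁻¹ *ᵥ h)) ⬝ᵥ (C *ᵥ (x *ᵥ h)) := by
    rw [← u_dot_B hB h (x *ᵥ h), Bsplit hC, dot_tmul]
  have e2 : h ⬝ᵥ (B⁻¹ *ᵥ h) = (C *ᵥ (B⁻¹ *ᵥ h)) ⬝ᵥ (C *ᵥ (B⁻¹ *ᵥ h)) := by
    rw [← u_dot_B hB h (B⁻¹ *ᵥ h), Bsplit hC, dot_tmul]
  have e3 : Sv B h x x = (C *ᵥ (x *ᵥ h)) ⬝ᵥ (C *ᵥ (x *ᵥ h)) := by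
    rw [Sv, Bsplit hC, dot_tmul]
  rw [e1, e2, e3]
  exact dotProduct_sq_le _ _

lemma exists_ortho (u : Vec3) (hu : u ≠ 0) : ∃ w : Vec3, w ≠ 0 ∧ u ⬝ᵥ w = 0 := by
  obtain ⟨i, hi⟩ := Function.ne_iff.mp hu
  have hz : ∀ (v : Vec3) (j : Fin 3), v j ≠ 0 → v ≠ 0 :=
    fun v j hv h0 => hv (by rw [h0]; rfl)
  fin_cases i
  · exact ⟨![u 1, -(u 0), 0], hz _ 1 (by simpa using hi), by
      simp [dotProduct, Fin.sum_univ_three]; ring⟩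
  · exact ⟨![-(u 1), u 0, 0], hz _ 0 (by simpa using hi), by
      simp [dotProduct, Fin.sum_univ_three]; ring⟩
  · exact ⟨![u 2, 0, -(u 0)], hz _ 0 (by simpa using hi), by
      simp [dotProduct, Fin.sum_univ_three]; ring⟩

lemma half_bound (hB : B.PosDef) (hFuchs : FuchsCond f₀ h B)
    (hΨ : ∀ w : Vec3, w ≠ 0 → 0 < w ⬝ᵥ (PsiM f₀ B *ᵥ w)) :
    B.det * (h ⬝ᵥ (B⁻¹ *ᵥ h)) < 1/2 := by
  rcases eq_or_ne h 0 with rfl | hh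
  · simp
  · have hu0 : B⁻¹ *ᵥ h ≠ 0 := by
      intro h0
      exact hh (by rw [← hBu hB h, h0, Matrix.mulVec_zero])
    obtain ⟨w, hw0, hwu⟩ := exists_ortho (B⁻¹ *ᵥ h) hu0
    have hAw : 0 < w ⬝ᵥ (B⁻¹ *ᵥ w) := by
      have := hB.inv.dotProduct_mulVec_pos hw0
      simpa using this
    have hvm : (vecMulVec (B⁻¹ *ᵥ h) (B⁻¹ *ᵥ h)) *ᵥ w = 0 := by
      have gen : ∀ u : Vec3, u ⬝ᵥ w = 0 → vecMulVec u u *ᵥ w = 0 := by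
        intro u huw
        simp only [dotProduct] at huw
        funext i
        simp only [Matrix.mulVec, dotProduct, Matrix.vecMulVec_apply, Pi.zero_apply]
        rw [show (∑ j, u i * u j * w j) = u i * ∑ j, u j * w j by
          rw [Finset.mul_sum]; exact Finset.sum_congr rfl fun j _ => by ring]
        rw [huw, mul_zero]
      exact gen _ hwu
    have hkey := hΨ w hw0
    rw [PsiEq hB hFuchs, Matrix.add_mulVec, Matrix.smul_mulVec, Matrix.smul_mulVec,
      hvm, smul_zero, add_zero, dotProduct_smul, smul_eq_mul] at hkey
    nlinarith [hkey, hAw]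

end PD
end EV



-- ===================== chunk D : integrals =====================
namespace EV
section INT
variable {B : Mat3} {f₀ : Vec3 → ℝ} {h : Vec3}

lemma continuous_quadDot (M : Mat3) : Continuous fun p : Vec3 => p ⬝ᵥ (M *ᵥ p) := by
  show Continuous fun p : Vec3 => ∑ i, p i * ∑ j, M i j * p j
  exact continuous_finset_sum _ fun i _ => (continuous_apply i).mul
    (continuous_finset_sum _ fun j _ => continuous_const.mul (continuous_apply j))

lemma continuous_quadForm (M : Mat3) : Continuous fun p => quadForm M p :=
  continuous_quadDot M

lemma continuous_quadDot2 (M N : Mat3) : Continuous fun p : Vec3 => quadForm M (N *ᵥ p) := by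
  show Continuous fun p : Vec3 =>
    ∑ i, (∑ a, N i a * p a) * ∑ j, M i j * ∑ b, N j b * p b
  exact continuous_finset_sum _ fun i _ =>
    (continuous_finset_sum _ fun a _ => continuous_const.mul (continuous_apply a)).mul
      (continuous_finset_sum _ fun j _ => continuous_const.mul
        (continuous_finset_sum _ fun b _ => continuous_const.mul (continuous_apply b)))

lemma cW_contOn (hB : B.PosDef) :
    ContinuousOn (fun p => (Real.sqrt (quadForm B p))⁻¹) {(0:Vec3)}ᶜ := by
  apply ContinuousOn.inv₀
  · exact (Real.continuous_sqrt.comp (continuous_quadForm B)).continuousOn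
  · intro p hp
    have hp0 : p ≠ 0 := by simpa using hp
    exact (Real.sqrt_pos.mpr (quadForm_pos hB hp0)).ne'

lemma contmul (hf_cont : Continuous f₀) (hf_supp0 : (0:Vec3) ∉ tsupport f₀)
    {W : Vec3 → ℝ} (hW : ContinuousOn W {(0:Vec3)}ᶜ) :
    Continuous fun p => W p * f₀ p := by
  rw [continuous_iff_continuousAt]
  intro p
  rcases eq_or_ne p 0 with rfl | hp
  · have hopen : IsOpen (tsupport f₀)ᶜ := (isClosed_tsupport f₀).isOpen_compl
    have hmem : (tsupport f₀)ᶜ ∈ 𝓝 (0:Vec3) := hopen.mem_nhds hf_supp0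
    have hev : (fun p => W p * f₀ p) =ᶠ[𝓝 (0:Vec3)] (fun _ => 0) := by
      filter_upwards [hmem] with q hq
      rw [image_eq_zero_of_notMem_tsupport hq, mul_zero]
    exact ContinuousAt.congr continuousAt_const hev.symm
  · exact (hW.continuousAt (isOpen_compl_singleton.mem_nhds hp)).mul hf_cont.continuousAt

lemma hcs (hf_supp : HasCompactSupport f₀) (W : Vec3 → ℝ) :
    HasCompactSupport fun p => W p * f₀ p := hf_supp.mul_left

lemma integmul (hf_cont : Continuous f₀) (hf_supp : HasCompactSupport f₀)
    (hf_supp0 : (0:Vec3) ∉ tsupport f₀)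
    {W : Vec3 → ℝ} (hW : ContinuousOn W {(0:Vec3)}ᶜ) :
    Integrable (fun p => W p * f₀ p) :=
  (contmul hf_cont hf_supp0 hW).integrable_of_hasCompactSupport (hcs hf_supp W)

lemma trace_mul_psi (hB : B.PosDef) (hf_cont : Continuous f₀)
    (hf_supp : HasCompactSupport f₀) (hf_supp0 : (0:Vec3) ∉ tsupport f₀) (D : Mat3) :
    (D * PsiM f₀ B).trace = (4*π) * Real.sqrt B.det *
      ∫ p : Vec3, (Real.sqrt (quadForm B p))⁻¹ * ((p ⬝ᵥ (D *ᵥ p)) * f₀ p) := by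
  have hint : ∀ i j : Fin 3,
      Integrable (fun p : Vec3 => D i j * ((Real.sqrt (quadForm B p))⁻¹ * (p j * p i * f₀ p))) := by
    intro i j
    have : (fun p : Vec3 => D i j * ((Real.sqrt (quadForm B p))⁻¹ * (p j * p i * f₀ p)))
        = fun p => (D i j * ((Real.sqrt (quadForm B p))⁻¹ * (p j * p i))) * f₀ p :=
      funext fun p => by ring
    rw [this]
    exact integmul hf_cont hf_supp hf_supp0
      ((continuous_const.continuousOn.mul ((cW_contOn hB).mul
        (((continuous_apply j).mul (continuous_apply i)).continuousOn))))
  have hlhs : (D * PsiM f₀ B).trace = ∑ i, ∑ j, D i j *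
      ((4*π) * Real.sqrt B.det *
        ∫ p : Vec3, (Real.sqrt (quadForm B p))⁻¹ * (p j * p i * f₀ p)) := by
    simp [Matrix.trace, Matrix.diag, Matrix.mul_apply, PsiM]
  rw [hlhs]
  have step : ∀ i j : Fin 3, D i j * ((4*π) * Real.sqrt B.det *
        ∫ p : Vec3, (Real.sqrt (quadForm B p))⁻¹ * (p j * p i * f₀ p))
      = (4*π) * Real.sqrt B.det *
        ∫ p : Vec3, D i j * ((Real.sqrt (quadForm B p))⁻¹ * (p j * p i * f₀ p)) := by
    intro i j
    rw [MeasureTheory.integral_const_mul]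
    ring
  simp only [step]
  simp only [← Finset.mul_sum]
  congr 1
  have hswap : ∀ i : Fin 3, (∑ j, ∫ p : Vec3,
        D i j * ((Real.sqrt (quadForm B p))⁻¹ * (p j * p i * f₀ p)))
      = ∫ p : Vec3, ∑ j, D i j * ((Real.sqrt (quadForm B p))⁻¹ * (p j * p i * f₀ p)) := by
    intro i
    rw [← MeasureTheory.integral_finset_sum]
    intro j _
    exact hint i j
  simp only [hswap]
  rw [← MeasureTheory.integral_finset_sum]
  · congr 1
    funext p
    simp only [dotProduct, Matrix.mulVec, Fin.sum_univ_three]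
    ring
  · intro i _
    exact integrable_finset_sum _ fun j _ => hint i j

lemma trace_mul_chi (hB : B.PosDef) (hf_cont : Continuous f₀)
    (hf_supp : HasCompactSupport f₀) (hf_supp0 : (0:Vec3) ∉ tsupport f₀) (D y : Mat3) :
    (D * chiM f₀ B y).trace = (4*π) * Real.sqrt B.det *
      ∫ p : Vec3, ((Real.sqrt (quadForm B p))⁻¹^3) *
        (quadForm y (B *ᵥ p) * ((p ⬝ᵥ (D *ᵥ p)) * f₀ p)) := by
  have hW : ContinuousOn (fun p : Vec3 => (Real.sqrt (quadForm B p))⁻¹^3 *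
      (quadForm y (B *ᵥ p))) {(0:Vec3)}ᶜ := by
    refine ContinuousOn.mul ?_ ?_
    · exact (cW_contOn hB).pow 3
    · exact (continuous_quadDot2 y B).continuousOn
  have hint : ∀ i j : Fin 3,
      Integrable (fun p : Vec3 => D i j * ((Real.sqrt (quadForm B p))⁻¹^3 *
        (quadForm y (B *ᵥ p) * (p j * p i * f₀ p)))) := by
    intro i j
    have : (fun p : Vec3 => D i j * ((Real.sqrt (quadForm B p))⁻¹^3 *
        (quadForm y (B *ᵥ p) * (p j * p i * f₀ p))))
        = fun p => (D i j * ((Real.sqrt (quadForm B p))⁻¹^3 * quadForm y (B *ᵥ p) * (p j * p i)))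
            * f₀ p := funext fun p => by ring
    rw [this]
    refine integmul hf_cont hf_supp hf_supp0 ?_
    exact continuous_const.continuousOn.mul ((hW.mul
      (((continuous_apply j).mul (continuous_apply i)).continuousOn)))
  have hlhs : (D * chiM f₀ B y).trace = ∑ i, ∑ j, D i j *
      ((4*π) * Real.sqrt B.det * ∫ p : Vec3, (Real.sqrt (quadForm B p))⁻¹^3 *
        (quadForm y (B *ᵥ p) * (p j * p i * f₀ p))) := by
    simp [Matrix.trace, Matrix.diag, Matrix.mul_apply, chiM]
  rw [hlhs]
  have step : ∀ i j : Fin 3, D i j * ((4*π) * Real.sqrt B.det *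
        ∫ p : Vec3, (Real.sqrt (quadForm B p))⁻¹^3 *
          (quadForm y (B *ᵥ p) * (p j * p i * f₀ p)))
      = (4*π) * Real.sqrt B.det *
        ∫ p : Vec3, D i j * ((Real.sqrt (quadForm B p))⁻¹^3 *
          (quadForm y (B *ᵥ p) * (p j * p i * f₀ p))) := by
    intro i j
    rw [MeasureTheory.integral_const_mul]
    ring
  simp only [step]
  simp only [← Finset.mul_sum]
  congr 1
  have hswap : ∀ i : Fin 3, (∑ j, ∫ p : Vec3,
        D i j * ((Real.sqrt (quadForm B p))⁻¹^3 * (quadForm y (B *ᵥ p) * (p j * p i * f₀ p))))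
      = ∫ p : Vec3, ∑ j, D i j * ((Real.sqrt (quadForm B p))⁻¹^3 *
          (quadForm y (B *ᵥ p) * (p j * p i * f₀ p))) := by
    intro i
    rw [← MeasureTheory.integral_finset_sum]
    intro j _
    exact hint i j
  simp only [hswap]
  rw [← MeasureTheory.integral_finset_sum]
  · congr 1
    funext p
    simp only [dotProduct, Matrix.mulVec, Fin.sum_univ_three]
    ring
  · intro i _
    exact integrable_finset_sum _ fun j _ => hint i j

end INT
end EV



-- ===================== chunk E =====================
namespace EV
section INT2
variable {B : Mat3} {f₀ : Vec3 → ℝ} {h : Vec3}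

lemma exists_pt (hf_cont : Continuous f₀) (hf_nonneg : ∀ p, 0 ≤ f₀ p) (hf_ne : f₀ ≠ 0)
    (w : Vec3) (hw : w ≠ 0) : ∃ p : Vec3, 0 < f₀ p ∧ p ⬝ᵥ w ≠ 0 := by
  obtain ⟨p₀, hp₀⟩ := Function.ne_iff.mp hf_ne
  have hp₀pos : 0 < f₀ p₀ := lt_of_le_of_ne (hf_nonneg p₀) (Ne.symm hp₀)
  have hU : IsOpen {p : Vec3 | 0 < f₀ p} := isOpen_lt continuous_const hf_cont
  obtain ⟨ε, hε, hball⟩ := Metric.isOpen_iff.mp hU p₀ hp₀pos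
  rcases eq_or_ne (p₀ ⬝ᵥ w) 0 with h0 | h0
  · set t : ℝ := ε / (2*(‖w‖+1)) with ht
    have hwpos : (0:ℝ) < ‖w‖ + 1 := by positivity
    have htpos : 0 < t := by positivity
    refine ⟨p₀ + t • w, ?_, ?_⟩
    · apply hball
      rw [Metric.mem_ball, dist_eq_norm]
      have : p₀ + t • w - p₀ = t • w := by abel
      rw [this, norm_smul]
      have h1 : ‖t‖ = t := abs_of_pos htpos
      rw [h1]
      have h2 : t * ‖w‖ ≤ t * (‖w‖ + 1) := by nlinarith [norm_nonneg w]
      have h3 : t * (‖w‖ + 1) = ε/2 := by rw [ht]; field_simp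
      linarith
    · rw [add_dotProduct, h0, zero_add, smul_dotProduct, smul_eq_mul]
      exact mul_ne_zero htpos.ne' (dotProduct_self_pos w hw).ne'
  · exact ⟨p₀, hp₀pos, h0⟩

lemma Psi_pos (hB : B.PosDef) (hf_cont : Continuous f₀) (hf_nonneg : ∀ p, 0 ≤ f₀ p)
    (hf_supp : HasCompactSupport f₀) (hf_supp0 : (0:Vec3) ∉ tsupport f₀) (hf_ne : f₀ ≠ 0)
    (w : Vec3) (hw : w ≠ 0) : 0 < w ⬝ᵥ (PsiM f₀ B *ᵥ w) := by
  have hrep : w ⬝ᵥ (PsiM f₀ B *ᵥ w) = (4*π) * Real.sqrt B.det *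
      ∫ p : Vec3, (Real.sqrt (quadForm B p))⁻¹ * ((p ⬝ᵥ w)^2 * f₀ p) := by
    have h1 : w ⬝ᵥ (PsiM f₀ B *ᵥ w) = (vecMulVec w w * PsiM f₀ B).trace := by
      rw [Matrix.trace_mul_comm, trace_mul_vecMulVec]
    rw [h1, trace_mul_psi hB hf_cont hf_supp hf_supp0]
    congr 1
    congr 1
    funext p
    have : p ⬝ᵥ (vecMulVec w w *ᵥ p) = (p ⬝ᵥ w)^2 := by
      simp [dotProduct, Matrix.mulVec, Matrix.vecMulVec_apply, Fin.sum_univ_three]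
      ring
    rw [this]
  rw [hrep]
  have hc : (0:ℝ) < 4*π * Real.sqrt B.det :=
    mul_pos (by positivity) (Real.sqrt_pos.mpr hB.det_pos)
  refine mul_pos hc ?_
  obtain ⟨p₁, hp₁, hdp⟩ := exists_pt hf_cont hf_nonneg hf_ne w hw
  have hp₁0 : p₁ ≠ 0 := fun h0 => hdp (by rw [h0, zero_dotProduct])
  have hWcont : ContinuousOn (fun p : Vec3 => (Real.sqrt (quadForm B p))⁻¹ * (p ⬝ᵥ w)^2)
      {(0:Vec3)}ᶜ :=
    (cW_contOn hB).mul (((continuous_quadDot (vecMulVec w w)).continuousOn).congr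
      (fun p _ => by
        simp [dotProduct, Matrix.mulVec, Matrix.vecMulVec_apply, Fin.sum_univ_three]; ring))
  have heq : (fun p : Vec3 => (Real.sqrt (quadForm B p))⁻¹ * ((p ⬝ᵥ w)^2 * f₀ p))
      = fun p => ((Real.sqrt (quadForm B p))⁻¹ * (p ⬝ᵥ w)^2) * f₀ p := funext fun p => by ring
  rw [heq]
  refine Continuous.integral_pos_of_hasCompactSupport_nonneg_nonzero
    (contmul hf_cont hf_supp0 hWcont) (hcs hf_supp _) ?_ ?_ (x := p₁)
  · intro p
    exact mul_nonneg (mul_nonneg (inv_nonneg.mpr (Real.sqrt_nonneg _)) (sq_nonneg _))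
      (hf_nonneg p)
  · have hq : 0 < Real.sqrt (quadForm B p₁) := Real.sqrt_pos.mpr (quadForm_pos hB hp₁0)
    have : 0 < (Real.sqrt (quadForm B p₁))⁻¹ * (p₁ ⬝ᵥ w)^2 * f₀ p₁ := by
      apply mul_pos (mul_pos (inv_pos.mpr hq) (by positivity)) hp₁
    exact this.ne'

lemma quad_shift (hB : B.PosDef) (y : Mat3) (p : Vec3) :
    quadForm y (B *ᵥ p) = p ⬝ᵥ ((B*y*B) *ᵥ p) := by
  rw [BxB_mulVec, dot_shift B (Bsymm hB) p]
  rfl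

lemma chi_symm (hB : B.PosDef) (hf_cont : Continuous f₀)
    (hf_supp : HasCompactSupport f₀) (hf_supp0 : (0:Vec3) ∉ tsupport f₀) (x y : Mat3) :
    ((B*x*B) * chiM f₀ B y).trace = ((B*y*B) * chiM f₀ B x).trace := by
  rw [trace_mul_chi hB hf_cont hf_supp hf_supp0, trace_mul_chi hB hf_cont hf_supp hf_supp0]
  congr 1
  congr 1
  funext p
  rw [quad_shift hB, quad_shift hB]
  ring

lemma chi_bound (hB : B.PosDef) (hf_cont : Continuous f₀) (hf_nonneg : ∀ p, 0 ≤ f₀ p)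
    (hf_supp : HasCompactSupport f₀) (hf_supp0 : (0:Vec3) ∉ tsupport f₀)
    (x : Mat3) (hx : xᵀ = x) :
    ((B*x*B) * chiM f₀ B x).trace ≤ ((B*x*B*x*B) * PsiM f₀ B).trace := by
  obtain ⟨C, hC, hCu⟩ := exists_sqrtB hB
  rw [trace_mul_chi hB hf_cont hf_supp hf_supp0, trace_mul_psi hB hf_cont hf_supp hf_supp0]
  have hc : (0:ℝ) ≤ 4*π * Real.sqrt B.det := by positivity
  refine mul_le_mul_of_nonneg_left ?_ hc
  have hint1 : Integrable (fun p : Vec3 => (Real.sqrt (quadForm B p))⁻¹^3 *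
      (quadForm x (B *ᵥ p) * ((p ⬝ᵥ ((B*x*B) *ᵥ p)) * f₀ p))) := by
    have : (fun p : Vec3 => (Real.sqrt (quadForm B p))⁻¹^3 *
        (quadForm x (B *ᵥ p) * ((p ⬝ᵥ ((B*x*B) *ᵥ p)) * f₀ p)))
        = fun p => ((Real.sqrt (quadForm B p))⁻¹^3 * quadForm x (B *ᵥ p)
            * (p ⬝ᵥ ((B*x*B) *ᵥ p))) * f₀ p := funext fun p => by ring
    rw [this]
    exact integmul hf_cont hf_supp hf_supp0
      ((((cW_contOn hB).pow 3).mul (continuous_quadDot2 x B).continuousOn).mul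
        (continuous_quadDot (B*x*B)).continuousOn)
  have hint2 : Integrable (fun p : Vec3 => (Real.sqrt (quadForm B p))⁻¹ *
      ((p ⬝ᵥ ((B*x*B*x*B) *ᵥ p)) * f₀ p)) := by
    have : (fun p : Vec3 => (Real.sqrt (quadForm B p))⁻¹ *
        ((p ⬝ᵥ ((B*x*B*x*B) *ᵥ p)) * f₀ p))
        = fun p => ((Real.sqrt (quadForm B p))⁻¹ * (p ⬝ᵥ ((B*x*B*x*B) *ᵥ p))) * f₀ p :=
      funext fun p => by ring
    rw [this]
    exact integmul hf_cont hf_supp hf_supp0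
      ((cW_contOn hB).mul (continuous_quadDot (B*x*B*x*B)).continuousOn)
  refine MeasureTheory.integral_mono hint1 hint2 ?_
  intro p
  rcases eq_or_ne p 0 with rfl | hp
  · simp [quadForm]
  · set q : ℝ := quadForm B p with hqdef
    have hq : 0 < q := quadForm_pos hB hp
    have hsq : 0 < Real.sqrt q := Real.sqrt_pos.mpr hq
    set s : ℝ := p ⬝ᵥ ((B*x*B) *ᵥ p) with hsdef
    set t : ℝ := p ⬝ᵥ ((B*x*B*x*B) *ᵥ p) with htdef
    -- Cauchy-Schwarz : s^2 ≤ q * t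
    have hBv : ∀ z : Vec3, B *ᵥ z = Cᵀ *ᵥ (C *ᵥ z) := fun z => Bsplit hC z
    have hs_ab : s = (C *ᵥ p) ⬝ᵥ (C *ᵥ (x *ᵥ (B *ᵥ p))) := by
      rw [hsdef, BxB_mulVec, hBv (x *ᵥ (B *ᵥ p)), dot_tmul]
    have hq_ab : q = (C *ᵥ p) ⬝ᵥ (C *ᵥ p) := by
      rw [hqdef, quadForm, show B.mulVec p = Cᵀ *ᵥ (C *ᵥ p) from hBv p, dot_tmul]
    have ht_ab : t = (C *ᵥ (x *ᵥ (B *ᵥ p))) ⬝ᵥ (C *ᵥ (x *ᵥ (B *ᵥ p))) := by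
      have h1 : (B*x*B*x*B) *ᵥ p = B *ᵥ (x *ᵥ (B *ᵥ (x *ᵥ (B *ᵥ p)))) := by
        simp [Matrix.mulVec_mulVec, Matrix.mul_assoc]
      rw [htdef, h1, dot_shift B (Bsymm hB) p, dot_shift x hx,
        hBv (x *ᵥ (B *ᵥ p)), dot_tmul]
    have hCS : s^2 ≤ q * t := by
      rw [hs_ab, hq_ab, ht_ab]
      exact dotProduct_sq_le _ _
    have ht0 : 0 ≤ t := by
      rw [ht_ab]
      exact Finset.sum_nonneg fun i _ => mul_self_nonneg _
    simp only [quad_shift hB]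
    show (Real.sqrt q)⁻¹^3 * (s * (s * f₀ p)) ≤ (Real.sqrt q)⁻¹ * (t * f₀ p)
    have hinv2 : ((Real.sqrt q)⁻¹)^2 = q⁻¹ := by
      rw [inv_pow, Real.sq_sqrt hq.le]
    have hkey : q⁻¹ * s^2 ≤ t := by
      rw [inv_mul_le_iff₀ hq]
      nlinarith [hCS]
    calc (Real.sqrt q)⁻¹^3 * (s * (s * f₀ p))
        = ((Real.sqrt q)⁻¹ * f₀ p) * (q⁻¹ * s^2) := by
          rw [show ((Real.sqrt q)⁻¹:ℝ)^3 = (Real.sqrt q)⁻¹ * ((Real.sqrt q)⁻¹)^2 by ring,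
            hinv2]; ring
      _ ≤ ((Real.sqrt q)⁻¹ * f₀ p) * t := by
          refine mul_le_mul_of_nonneg_left hkey ?_
          exact mul_nonneg (inv_nonneg.mpr hsq.le) (hf_nonneg p)
      _ = (Real.sqrt q)⁻¹ * (t * f₀ p) := by ring

end INT2
end EV



-- ===================== chunk F =====================
namespace EV
section FORM
variable {B : Mat3} {f₀ : Vec3 → ℝ} {h : Vec3}

/-- the singular-part operator acting on k (second component, without Z). -/
def Gm (f₀ : Vec3 → ℝ) (h : Vec3) (B : Mat3) (k : Mat3) : Mat3 :=
  k - chiM f₀ B k + (B * k).trace • PsiM f₀ B - MM B⁻¹ h k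

lemma G_pair (hB : B.PosDef) (hFuchs : FuchsCond f₀ h B) (hf_cont : Continuous f₀)
    (hf_supp : HasCompactSupport f₀) (hf_supp0 : (0:Vec3) ∉ tsupport f₀)
    (x y : Mat3) (hx : xᵀ = x) :
    tp B x (Gm f₀ h B y)
      = (1 - 2*B.det*(h ⬝ᵥ (B⁻¹ *ᵥ h))) * tp B x y - ((B*x*B) * chiM f₀ B y).trace
        + (1/2 + B.det*(h ⬝ᵥ (B⁻¹ *ᵥ h))) * ((B*x).trace * (B*y).trace)
        - 2*B.det*((B*y).trace * (h ⬝ᵥ (x *ᵥ h)) + (h ⬝ᵥ (y *ᵥ h)) * (B*x).trace)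
        + 8*B.det*Sv B h x y := by
  rw [Gm, tp_sub, tp_add, tp_sub, tp_smul, tp_Psi hB hFuchs, tp_MM hB h x y hx, tp_eq B x (chiM f₀ B y)]
  ring

lemma G_symm (hB : B.PosDef) (hFuchs : FuchsCond f₀ h B) (hf_cont : Continuous f₀)
    (hf_supp : HasCompactSupport f₀) (hf_supp0 : (0:Vec3) ∉ tsupport f₀)
    (x y : Mat3) (hx : xᵀ = x) (hy : yᵀ = y) :
    tp B x (Gm f₀ h B y) = tp B y (Gm f₀ h B x) := by
  rw [G_pair hB hFuchs hf_cont hf_supp hf_supp0 x y hx,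
    G_pair hB hFuchs hf_cont hf_supp hf_supp0 y x hy,
    chi_symm hB hf_cont hf_supp hf_supp0 x y, tp_comm B x y, Sv_comm hB h x y]
  ring

lemma G_pos (hB : B.PosDef) (hFuchs : FuchsCond f₀ h B) (hf_cont : Continuous f₀)
    (hf_nonneg : ∀ p, 0 ≤ f₀ p) (hf_supp : HasCompactSupport f₀)
    (hf_supp0 : (0:Vec3) ∉ tsupport f₀) (hf_ne : f₀ ≠ 0)
    (x : Mat3) (hx : xᵀ = x) (hx0 : x ≠ 0) :
    0 < tp B x (Gm f₀ h B x) := by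
  rw [G_pair hB hFuchs hf_cont hf_supp hf_supp0 x x hx]
  set γ : ℝ := B.det with hγdef
  set α : ℝ := h ⬝ᵥ (B⁻¹ *ᵥ h) with hαdef
  set τ : ℝ := (B*x).trace with hτdef
  set β : ℝ := h ⬝ᵥ (x *ᵥ h) with hβdef
  set S : ℝ := Sv B h x x with hSdef
  set P : ℝ := tp B x x with hPdef
  set X : ℝ := ((B*x*B) * chiM f₀ B x).trace with hXdef
  have hγ : 0 < γ := hB.det_pos
  have hα : 0 ≤ α := by
    have := hB.inv.posSemidef.dotProduct_mulVec_nonneg h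
    rw [hαdef]
    simpa using this
  have hP : 0 < P := tp_pos hB hx hx0
  have hS : 0 ≤ S := Sv_nonneg hB h x
  have hCS : β^2 ≤ α * S := beta_sq_le hB h x
  have hXle : X ≤ (1/2 - γ*α) * P + 2*γ*S := by
    calc X ≤ ((B*x*B*x*B) * PsiM f₀ B).trace :=
          chi_bound hB hf_cont hf_nonneg hf_supp hf_supp0 x hx
      _ = (1/2 - γ*α) * P + 2*γ*S := trace_BxBxB_Psi hB hFuchs x hx
  have hhalf : γ*α < 1/2 :=
    half_bound hB hFuchs (Psi_pos hB hf_cont hf_nonneg hf_supp hf_supp0 hf_ne)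
  have hE : 0 ≤ 2*γ*α/3*τ^2 + 6*γ*S - 4*γ*τ*β := by
    rcases eq_or_lt_of_le hα with hα0 | hα0
    · have hβ : β = 0 := by
        have hβ2 : β^2 ≤ 0 := by rw [← hα0] at hCS; linarith
        have := sq_nonneg β
        have : β^2 = 0 := le_antisymm hβ2 this
        exact sq_eq_zero_iff.mp this
      rw [hβ, ← hα0]
      have := mul_nonneg hγ.le hS
      nlinarith [this]
    · have h3 : 0 ≤ 2*γ*(α*τ - 3*β)^2 + 18*γ*(α*S - β^2) := by
        have := mul_nonneg hγ.le (sq_nonneg (α*τ - 3*β))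
        have := mul_nonneg hγ.le (sub_nonneg.mpr hCS)
        nlinarith
      nlinarith [h3, hα0, mul_pos hγ hα0]
  have h1 : 0 < (1/2 - γ*α) * P := mul_pos (by linarith) hP
  have h2 : 0 ≤ (1/2 + γ*α/3) * (τ*τ) := by
    have := mul_nonneg (mul_nonneg hγ.le hα) (mul_self_nonneg τ)
    nlinarith [mul_self_nonneg τ]
  nlinarith [h1, h2, hE, hXle]

lemma L_pair (hB : B.PosDef) (x y : Mat3) :
    tp B x ((2:ℝ) • y + (B*y).trace • B⁻¹) = 2 * tp B x y + (B*y).trace * (B*x).trace := by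
  rw [tp_add, tp_smul, tp_smul, tp_inv hB]

end FORM
end EV


/-- all complex eigenvalues of the Fuchsian matrix N of the rescaled
Einstein–Vlasov system have positive real part, and real part > 1 when hᵀAh < (det A)/6.
A complex eigenvalue λ of the real operator N on Sym3 × Sym3 is encoded by a nonzero pair
of real eigenvector parts (k₁,Z₁), (k₂,Z₂) with N(v₁+iv₂) = λ(v₁+iv₂). -/
theorem vlasov_N_eigenvalues (f₀ : Vec3 → ℝ) (h : Vec3)
    (hf_smooth : ContDiff ℝ (⊤ : ℕ∞) f₀) (hf_nonneg : ∀ p, 0 ≤ f₀ p)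
    (hf_supp : HasCompactSupport f₀) (hf_supp0 : (0 : Vec3) ∉ tsupport f₀)
    (hf_ne : f₀ ≠ 0)
    (B : Mat3) (hB : B.PosDef) (hFuchs : FuchsCond f₀ h B) :
    (∀ (lam : ℂ) (k₁ Z₁ k₂ Z₂ : Mat3),
      k₁.IsSymm → Z₁.IsSymm → k₂.IsSymm → Z₂.IsSymm →
      ¬ (k₁ = 0 ∧ Z₁ = 0 ∧ k₂ = 0 ∧ Z₂ = 0) →
      Nfst (B⁻¹) B k₁ Z₁ = lam.re • k₁ - lam.im • k₂ →
      Nsnd f₀ h (B⁻¹) B k₁ Z₁ = lam.re • Z₁ - lam.im • Z₂ →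
      Nfst (B⁻¹) B k₂ Z₂ = lam.im • k₁ + lam.re • k₂ →
      Nsnd f₀ h (B⁻¹) B k₂ Z₂ = lam.im • Z₁ + lam.re • Z₂ →
      0 < lam.re) ∧
    (h ⬝ᵥ (B⁻¹).mulVec h < (B⁻¹).det / 6 →
      ∀ (lam : ℂ) (k₁ Z₁ k₂ Z₂ : Mat3),
        k₁.IsSymm → Z₁.IsSymm → k₂.IsSymm → Z₂.IsSymm →
        ¬ (k₁ = 0 ∧ Z₁ = 0 ∧ k₂ = 0 ∧ Z₂ = 0) →
        Nfst (B⁻¹) B k₁ Z₁ = lam.re • k₁ - lam.im • k₂ →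
        Nsnd f₀ h (B⁻¹) B k₁ Z₁ = lam.re • Z₁ - lam.im • Z₂ →
        Nfst (B⁻¹) B k₂ Z₂ = lam.im • k₁ + lam.re • k₂ →
        Nsnd f₀ h (B⁻¹) B k₂ Z₂ = lam.im • Z₁ + lam.re • Z₂ →
        1 < lam.re) := by
  have hf_cont : Continuous f₀ := hf_smooth.continuous
  have key : ∀ (lam : ℂ) (k₁ Z₁ k₂ Z₂ : Mat3),
      k₁.IsSymm → Z₁.IsSymm → k₂.IsSymm → Z₂.IsSymm →
      ¬ (k₁ = 0 ∧ Z₁ = 0 ∧ k₂ = 0 ∧ Z₂ = 0) →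
      Nfst (B⁻¹) B k₁ Z₁ = lam.re • k₁ - lam.im • k₂ →
      Nsnd f₀ h (B⁻¹) B k₁ Z₁ = lam.re • Z₁ - lam.im • Z₂ →
      Nfst (B⁻¹) B k₂ Z₂ = lam.im • k₁ + lam.re • k₂ →
      Nsnd f₀ h (B⁻¹) B k₂ Z₂ = lam.im • Z₁ + lam.re • Z₂ →
      1 < lam.re := by
    intro lam k₁ Z₁ k₂ Z₂ hs1 hq1 hs3 hq2 hnz heq1 heq2 heq3 heq4
    set x : ℝ := lam.re with hxdef
    set y : ℝ := lam.im with hydef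
    clear_value x y
    have hsy1 : k₁ᵀ = k₁ := hs1
    have hsy3 : k₂ᵀ = k₂ := hs3
    -- k₁ and k₂ cannot both vanish
    have hkk : ¬ (k₁ = 0 ∧ k₂ = 0) := by
      rintro ⟨rfl, rfl⟩
      apply hnz
      have hZ1 : Z₁ = 0 := by
        have h' := heq1
        simp only [Nfst, Matrix.mul_zero, Matrix.trace_zero, zero_smul, smul_zero,
          add_zero, zero_add, zero_sub, sub_zero, neg_eq_zero] at h'
        rcases smul_eq_zero.mp h' with h2 | h2
        · norm_num at h2
        · exact h2
      have hZ2 : Z₂ = 0 := by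
        have h' := heq3
        simp only [Nfst, Matrix.mul_zero, Matrix.trace_zero, zero_smul, smul_zero,
          add_zero, zero_add, zero_sub, sub_zero, neg_eq_zero] at h'
        rcases smul_eq_zero.mp h' with h2 | h2
        · norm_num at h2
        · exact h2
      exact ⟨rfl, hZ1, rfl, hZ2⟩
    -- pairing helpers
    have pf : ∀ (s k Z R : Mat3), Nfst B⁻¹ B k Z = R →
        2 * EV.tp B s k + (B*k).trace * (B*s).trace - 2 * EV.tp B s Z = EV.tp B s R := by
      intro s k Z R heq
      have hc := congrArg (EV.tp B s) heq
      rw [show Nfst B⁻¹ B k Z = ((2:ℝ)•k + (B*k).trace • B⁻¹) - (2:ℝ)•Z from rfl] at hc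
      rw [EV.tp_sub, EV.L_pair hB, EV.tp_smul] at hc
      linarith [hc]
    have pg : ∀ (s k Z R : Mat3), Nsnd f₀ h B⁻¹ B k Z = R →
        EV.tp B s (EV.Gm f₀ h B k) + EV.tp B s Z = EV.tp B s R := by
      intro s k Z R heq
      have hc := congrArg (EV.tp B s) heq
      rw [show Nsnd f₀ h B⁻¹ B k Z = EV.Gm f₀ h B k + Z from rfl, EV.tp_add] at hc
      exact hc
    -- scalar equations
    have e11 := pf k₁ k₁ Z₁ _ heq1
    rw [EV.tp_sub, EV.tp_smul, EV.tp_smul] at e11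
    have e21 := pf k₂ k₁ Z₁ _ heq1
    rw [EV.tp_sub, EV.tp_smul, EV.tp_smul] at e21
    have e12 := pf k₁ k₂ Z₂ _ heq3
    rw [EV.tp_add, EV.tp_smul, EV.tp_smul] at e12
    have e22 := pf k₂ k₂ Z₂ _ heq3
    rw [EV.tp_add, EV.tp_smul, EV.tp_smul] at e22
    have f11 := pg k₁ k₁ Z₁ _ heq2
    rw [EV.tp_sub, EV.tp_smul, EV.tp_smul] at f11
    have f21 := pg k₂ k₁ Z₁ _ heq2
    rw [EV.tp_sub, EV.tp_smul, EV.tp_smul] at f21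
    have f12 := pg k₁ k₂ Z₂ _ heq4
    rw [EV.tp_add, EV.tp_smul, EV.tp_smul] at f12
    have f22 := pg k₂ k₂ Z₂ _ heq4
    rw [EV.tp_add, EV.tp_smul, EV.tp_smul] at f22
    -- symmetries
    have psym : EV.tp B k₂ k₁ = EV.tp B k₁ k₂ := EV.tp_comm B k₂ k₁
    have gsym : EV.tp B k₁ (EV.Gm f₀ h B k₂) = EV.tp B k₂ (EV.Gm f₀ h B k₁) :=
      EV.G_symm hB hFuchs hf_cont hf_supp hf_supp0 k₁ k₂ hsy1 hsy3
    rw [psym] at e21 e22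
    rw [← gsym] at f21
    -- positivity (before abbreviations)
    have hn' : 0 < EV.tp B k₁ k₁ + EV.tp B k₂ k₂ := by
      rcases eq_or_ne k₁ 0 with h1 | h1
      · rcases eq_or_ne k₂ 0 with h2 | h2
        · exact absurd ⟨h1, h2⟩ hkk
        · have := EV.tp_pos hB hsy3 h2
          have h0 : EV.tp B k₁ k₁ = 0 := by rw [h1]; exact EV.tp_zero' B 0
          linarith
      · rcases eq_or_ne k₂ 0 with h2 | h2
        · have := EV.tp_pos hB hsy1 h1
          have h0 : EV.tp B k₂ k₂ = 0 := by rw [h2]; exact EV.tp_zero' B 0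
          linarith
        · have := EV.tp_pos hB hsy1 h1
          have h2' := EV.tp_pos hB hsy3 h2
          linarith
    have hg2' : 0 < EV.tp B k₁ (EV.Gm f₀ h B k₁) + EV.tp B k₂ (EV.Gm f₀ h B k₂) := by
      rcases eq_or_ne k₁ 0 with h1 | h1
      · rcases eq_or_ne k₂ 0 with h2 | h2
        · exact absurd ⟨h1, h2⟩ hkk
        · have := EV.G_pos hB hFuchs hf_cont hf_nonneg hf_supp hf_supp0 hf_ne k₂ hsy3 h2
          have h0 : EV.tp B k₁ (EV.Gm f₀ h B k₁) = 0 := by rw [h1]; exact EV.tp_zero' B _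
          linarith
      · rcases eq_or_ne k₂ 0 with h2 | h2
        · have := EV.G_pos hB hFuchs hf_cont hf_nonneg hf_supp hf_supp0 hf_ne k₁ hsy1 h1
          have h0 : EV.tp B k₂ (EV.Gm f₀ h B k₂) = 0 := by rw [h2]; exact EV.tp_zero' B _
          linarith
        · have := EV.G_pos hB hFuchs hf_cont hf_nonneg hf_supp hf_supp0 hf_ne k₁ hsy1 h1
          have h2' := EV.G_pos hB hFuchs hf_cont hf_nonneg hf_supp hf_supp0 hf_ne k₂ hsy3 h2
          linarith
    -- abbreviations
    set p11 : ℝ := EV.tp B k₁ k₁ with hp11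
    set p12 : ℝ := EV.tp B k₁ k₂ with hp12
    set p22 : ℝ := EV.tp B k₂ k₂ with hp22
    set t1 : ℝ := (B*k₁).trace with ht1
    set t2 : ℝ := (B*k₂).trace with ht2
    set z11 : ℝ := EV.tp B k₁ Z₁ with hz11
    set z12 : ℝ := EV.tp B k₁ Z₂ with hz12
    set z21 : ℝ := EV.tp B k₂ Z₁ with hz21
    set z22 : ℝ := EV.tp B k₂ Z₂ with hz22
    set G11 : ℝ := EV.tp B k₁ (EV.Gm f₀ h B k₁) with hG11
    set G12 : ℝ := EV.tp B k₁ (EV.Gm f₀ h B k₂) with hG12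
    set G22 : ℝ := EV.tp B k₂ (EV.Gm f₀ h B k₂) with hG22
    clear_value p11 p12 p22 t1 t2 z11 z12 z21 z22 G11 G12 G22
    have hn : 0 < p11 + p22 := hn'
    have hg2 : 0 < G11 + G22 := hg2'
    -- elimination of the Z-pairings
    have hzs : z11 + z22 = (2*(p11+p22) + t1*t1 + t2*t2 - x*(p11+p22))/2 := by
      linarith [e11, e22]
    have hzd : z21 - z12 = y*(p11+p22)/2 := by
      linarith [e21, e12]
    have key2 : 2*(G11 + G22) = (x-1)*(2*(p11+p22)+t1*t1+t2*t2)
        - x*(x-1)*(p11+p22) + y^2*(p11+p22) := by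
      linear_combination 2*f11 + 2*f22 + 2*(x-1)*hzs + 2*y*hzd
    have key1 : y*((2*x-1)*(p11+p22) - (2*(p11+p22)+t1*t1+t2*t2)) = 0 := by
      linear_combination (-2)*f21 + 2*f12 + 2*(1-x)*hzd + 2*y*hzs
    clear hp11 hp12 hp22 ht1 ht2 hz11 hz12 hz21 hz22 hG11 hG12 hG22
    clear heq1 heq2 heq3 heq4 pf pg psym gsym hn' hg2' hnz hkk hsy1 hsy3
    clear e11 e12 e21 e22 f11 f12 f21 f22
    clear hFuchs hf_cont hf_ne hf_supp hf_supp0 hf_nonneg hf_smooth hB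
    clear hs1 hq1 hs3 hq2
    clear k₁ Z₁ k₂ Z₂ B f₀ h lam hxdef hydef
    rcases eq_or_ne y 0 with hy | hy
    · rw [hy] at key2
      by_contra hx1
      push_neg at hx1
      have hl : 0 ≤ (1-x) * ((2*(p11+p22)+t1*t1+t2*t2) - x*(p11+p22)) := by
        refine mul_nonneg (by linarith) ?_
        nlinarith [hn, mul_self_nonneg t1, mul_self_nonneg t2]
      nlinarith [key2, hg2, hl]
    · have h0 := (mul_eq_zero.mp key1).resolve_left hy
      nlinarith [h0, hn, mul_self_nonneg t1, mul_self_nonneg t2]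
  constructor
  · intro lam k₁ Z₁ k₂ Z₂ h1 h2 h3 h4 h5 h6 h7 h8 h9
    exact lt_trans zero_lt_one (key lam k₁ Z₁ k₂ Z₂ h1 h2 h3 h4 h5 h6 h7 h8 h9)
  · intro _ lam k₁ Z₁ k₂ Z₂ h1 h2 h3 h4 h5 h6 h7 h8 h9
    exact key lam k₁ Z₁ k₂ Z₂ h1 h2 h3 h4 h5 h6 h7 h8 h9
end
end

section
/- Let f₀ : ℝ³ → [0,∞) be smooth, compactly supported in ℝ³∖{0} and not identically zero, let h ∈ ℝ³, let γ ∈ (1,2) and set c_γ = 1/(γ−1). Let B ∈ Sym3 be positive definite with A = B⁻¹ and a = det A, satisfying the Fuchsian condition at B (with f = f₀), and suppose hᵀAh < a/6. Define the linear operator N_γ on Sym3 × Sym3 by N_γ(k, Z) = c_γ · (γ k + tr(Bk) A − 2Z, k − χ_B(k) + tr(Bk) Ψ(B) − M_A(k) + Z). Then every eigenvalue λ ∈ ℂ of N_γ has real part strictly greater than 1. -/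
open MeasureTheory Matrix Real Filter Topology Set Asymptotics

noncomputable section

/-- First component of N_γ: (k,Z) ↦ c_γ (γ k + tr(Bk) A − 2Z), c_γ = 1/(γ−1). -/
def Ngfst (γ : ℝ) (A B k Z : Mat3) : Mat3 :=
  (1 / (γ - 1)) • (γ • k + (B * k).trace • A - (2:ℝ) • Z)

/-- Second component of N_γ: (k,Z) ↦ c_γ (k − χ_B(k) + tr(Bk) Ψ(B) − M_A(k) + Z). -/
def Ngsnd (γ : ℝ) (f : Vec3 → ℝ) (hv : Vec3) (A B k Z : Mat3) : Mat3 :=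
  (1 / (γ - 1)) • (k - chiM f B k + (B * k).trace • PsiM f B - MM A hv k + Z)

/- ===================== auxiliary lemmas ===================== -/

/-- the bilinear pairing ⟨X,Y⟩_B = tr(BXBY) -/
def sB (B X Y : Mat3) : ℝ := (B * X * B * Y).trace

lemma aux_posdef_isSymm {B : Mat3} (hB : B.PosDef) : B.IsSymm := by
  have h1 := hB.1
  rwa [Matrix.IsHermitian, Matrix.conjTranspose_eq_transpose_of_trivial] at h1

lemma sB_comm (B X Y : Mat3) : sB B X Y = sB B Y X := by
  unfold sB
  rw [mul_assoc (B*X) B Y, trace_mul_comm (B*X) (B*Y), ← mul_assoc (B*Y) B X]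

lemma aux_quad_pos {B : Mat3} (hB : B.PosDef) (p : Vec3) (hp : p ≠ 0) :
    0 < p ⬝ᵥ B.mulVec p := by
  have := hB.dotProduct_mulVec_pos hp; simpa using this

lemma aux_quad_nonneg {B : Mat3} (hB : B.PosDef) (p : Vec3) :
    0 ≤ p ⬝ᵥ B.mulVec p := by
  have := hB.posSemidef.dotProduct_mulVec_nonneg p; simpa using this

lemma symm_shift (M : Mat3) (hM : M.IsSymm) (x z : Vec3) :
    x ⬝ᵥ M.mulVec z = M.mulVec x ⬝ᵥ z := by
  simp only [dotProduct, Matrix.mulVec, dotProduct, Finset.mul_sum, Finset.sum_mul]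
  rw [Finset.sum_comm]
  refine Finset.sum_congr rfl fun i _ => Finset.sum_congr rfl fun j _ => ?_
  rw [hM.apply i j]; ring

lemma symm_dot_comm (B : Mat3) (hB : B.IsSymm) (x y : Vec3) :
    x ⬝ᵥ B.mulVec y = y ⬝ᵥ B.mulVec x := by
  simp only [dotProduct, Matrix.mulVec, dotProduct, Finset.mul_sum, Finset.sum_mul]
  rw [Finset.sum_comm]
  refine Finset.sum_congr rfl fun i _ => Finset.sum_congr rfl fun j _ => ?_
  rw [hB.apply i j]; ring

lemma cs_form (B : Mat3) (hB : B.PosDef) (x y : Vec3) :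
    (x ⬝ᵥ B.mulVec y)^2 ≤ (x ⬝ᵥ B.mulVec x) * (y ⬝ᵥ B.mulVec y) := by
  have key : ∀ t : ℝ, 0 ≤ (y ⬝ᵥ B.mulVec y) * (t*t) + (2 * (x ⬝ᵥ B.mulVec y)) * t + (x ⬝ᵥ B.mulVec x) := by
    intro t
    have h0 : 0 ≤ (x + t • y) ⬝ᵥ B.mulVec (x + t • y) := aux_quad_nonneg hB _
    have hyx := symm_dot_comm B (aux_posdef_isSymm hB) y x
    simp only [Matrix.mulVec_add, Matrix.mulVec_smul, add_dotProduct,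
      smul_dotProduct, dotProduct_add, dotProduct_smul,
      smul_eq_mul] at h0
    rw [hyx] at h0
    nlinarith [h0]
  have h2 := discrim_le_zero key
  unfold discrim at h2
  nlinarith [h2]

lemma trace_sq (T : Mat3) (hT : T.IsSymm) : (T * T).trace = ∑ i, ∑ j, (T i j)^2 := by
  rw [Matrix.trace]
  refine Finset.sum_congr rfl fun i _ => ?_
  rw [Matrix.diag_apply, Matrix.mul_apply]
  refine Finset.sum_congr rfl fun j _ => ?_
  rw [← hT.apply j i]; ring

open scoped MatrixOrder in
lemma sB_self_pos (B X : Mat3) (hB : B.PosDef) (hX : X.IsSymm) (hXne : X ≠ 0) :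
    0 < sB B X X := by
  classical
  set S := CFC.sqrt B with hS
  have hSS : S * S = B := CFC.sqrt_mul_sqrt_self B hB.posSemidef.nonneg
  have hSsymm : S.IsSymm := by
    have h1 := (Matrix.nonneg_iff_posSemidef.mp (CFC.sqrt_nonneg B)).1
    rwa [Matrix.IsHermitian, Matrix.conjTranspose_eq_transpose_of_trivial] at h1
  have hdet : S.det ≠ 0 := by
    intro h0
    have : B.det = 0 := by rw [← hSS, Matrix.det_mul, h0, mul_zero]
    exact (hB.det_pos.ne' this)
  set T := S * X * S with hTdef
  have hTsymm : T.IsSymm := by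
    unfold Matrix.IsSymm
    rw [hTdef, Matrix.transpose_mul, Matrix.transpose_mul, hSsymm.eq, hX.eq]
    rw [mul_assoc]
  have hTne : T ≠ 0 := by
    intro h0
    apply hXne
    have : S⁻¹ * (S * X * S) * S⁻¹ = S⁻¹ * (0:Mat3) * S⁻¹ := by rw [← h0]
    rw [mul_zero, zero_mul] at this
    rw [← this, ← mul_assoc, ← mul_assoc, Matrix.nonsing_inv_mul S hdet.isUnit, one_mul,
      mul_assoc, Matrix.mul_nonsing_inv S hdet.isUnit, mul_one]
  have key : sB B X X = (T * T).trace := by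
    unfold sB
    rw [← hSS, hTdef]
    rw [show S * S * X * (S * S) * X = S * (S * X * S * (S * X)) by noncomm_ring,
      trace_mul_comm S (S * X * S * (S * X)),
      show S * X * S * (S * X) * S = S * X * S * (S * X * S) by noncomm_ring]
  rw [key, trace_sq T hTsymm]
  have : ∃ i j, T i j ≠ 0 := by
    by_contra hc
    push_neg at hc
    exact hTne (by ext i j; exact hc i j)
  obtain ⟨i, j, hij⟩ := this
  refine Finset.sum_pos' (fun i _ => Finset.sum_nonneg fun j _ => sq_nonneg _) ?_
  exact ⟨i, Finset.mem_univ i, Finset.sum_pos' (fun j _ => sq_nonneg _)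
    ⟨j, Finset.mem_univ j, by positivity⟩⟩

lemma sB_self_nonneg (B X : Mat3) (hB : B.PosDef) (hX : X.IsSymm) : 0 ≤ sB B X X := by
  by_cases hXne : X = 0
  · simp [sB, hXne]
  · exact (sB_self_pos B X hB hX hXne).le

lemma quadForm_continuous (M : Mat3) : Continuous (quadForm M) := by
  unfold quadForm dotProduct Matrix.mulVec dotProduct
  fun_prop

lemma integrable_weight (f₀ : Vec3 → ℝ) (hf_smooth : ContDiff ℝ (⊤ : ℕ∞) f₀)
    (hf_supp : HasCompactSupport f₀) (hf_supp0 : (0 : Vec3) ∉ tsupport f₀)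
    (G : Vec3 → ℝ) (hG : ∀ p : Vec3, p ≠ 0 → ContinuousAt G p) :
    Integrable (fun p => G p * f₀ p) := by
  have hcont : Continuous fun p => G p * f₀ p := by
    rw [continuous_iff_continuousAt]
    intro p
    by_cases hp : p ∈ tsupport f₀
    · have hp0 : p ≠ 0 := fun h => hf_supp0 (h ▸ hp)
      exact (hG p hp0).mul (hf_smooth.continuous.continuousAt)
    · have hev : ∀ᶠ q in nhds p, f₀ q = 0 := by
        have : (tsupport f₀)ᶜ ∈ nhds p :=
          (isClosed_tsupport f₀).isOpen_compl.mem_nhds hp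
        filter_upwards [this] with q hq
        exact image_eq_zero_of_notMem_tsupport hq
      have : (fun q => G q * f₀ q) =ᶠ[nhds p] (fun _ => 0) := by
        filter_upwards [hev] with q hq; simp [hq]
      exact ContinuousAt.congr (continuousAt_const) this.symm
  have hsupp : HasCompactSupport fun p => G p * f₀ p :=
    HasCompactSupport.mul_left hf_supp
  exact hcont.integrable_of_hasCompactSupport hsupp

lemma trace_int (f₀ G : Vec3 → ℝ)
    (hInt : ∀ i j : Fin 3, Integrable (fun p => G p * (p i * p j * f₀ p)))
    (M : Mat3) (c : ℝ) :
    (M * (Matrix.of fun i j => c * ∫ p : Vec3, G p * (p i * p j * f₀ p))).trace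
      = c * ∫ p : Vec3, G p * ((p ⬝ᵥ M.mulVec p) * f₀ p) := by
  have step1 : (M * (Matrix.of fun i j => c * ∫ p : Vec3, G p * (p i * p j * f₀ p))).trace
      = ∑ i : Fin 3, ∑ j : Fin 3, ∫ p : Vec3, (M i j * c) * (G p * (p j * p i * f₀ p)) := by
    rw [Matrix.trace]
    refine Finset.sum_congr rfl fun i _ => ?_
    rw [Matrix.diag_apply, Matrix.mul_apply]
    refine Finset.sum_congr rfl fun j _ => ?_
    rw [Matrix.of_apply, ← mul_assoc, MeasureTheory.integral_const_mul]
  rw [step1]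
  have step2 : ∀ i : Fin 3, ∑ j : Fin 3, ∫ p : Vec3, (M i j * c) * (G p * (p j * p i * f₀ p))
      = ∫ p : Vec3, ∑ j : Fin 3, (M i j * c) * (G p * (p j * p i * f₀ p)) := by
    intro i
    rw [← MeasureTheory.integral_finset_sum]
    intro j _
    exact (hInt j i).const_mul _
  simp_rw [step2]
  rw [← MeasureTheory.integral_finset_sum]
  · rw [← MeasureTheory.integral_const_mul]
    refine MeasureTheory.integral_congr_ae (Filter.Eventually.of_forall fun p => ?_)
    simp only [dotProduct, Matrix.mulVec, Fin.sum_univ_three]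
    ring
  · intro i _
    refine integrable_finset_sum _ fun j _ => ?_
    exact (hInt j i).const_mul _

lemma dot_transpose (M : Mat3) (x : Vec3) :
    x ⬝ᵥ M.mulVec x = x ⬝ᵥ Mᵀ.mulVec x := by
  simp only [dotProduct, Matrix.mulVec, dotProduct, Finset.mul_sum]
  rw [Finset.sum_comm]
  refine Finset.sum_congr rfl fun i _ => Finset.sum_congr rfl fun j _ => ?_
  rw [Matrix.transpose_apply]; ring

lemma trace_mul_vecMulVec (M : Mat3) (v w : Vec3) :
    (M * vecMulVec v w).trace = w ⬝ᵥ M.mulVec v := by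
  simp only [Matrix.trace, Matrix.diag_apply, Matrix.mul_apply, Matrix.vecMulVec_apply,
    dotProduct, Matrix.mulVec, dotProduct, Finset.mul_sum]
  refine Finset.sum_congr rfl fun i _ => Finset.sum_congr rfl fun j _ => ?_
  ring

section AlgebraPairings
variable (B A : Mat3) (h : Vec3) (hBA : B * A = 1) (hAB : A * B = 1)
  (hAs : A.IsSymm)

include hBA in
lemma sB_A (X : Mat3) : sB B X A = (B * X).trace := by
  unfold sB
  rw [mul_assoc (B * X) B A, hBA, mul_one]

include hBA in
lemma sB_vmv_uw (X Y : Mat3) (hY : Y.IsSymm) :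
    sB B X (vecMulVec (A.mulVec h) (Y.mulVec h)) = h ⬝ᵥ (Y * B * X).mulVec h := by
  unfold sB
  rw [trace_mul_vecMulVec, Matrix.mulVec_mulVec, mul_assoc (B * X) B A, hBA, mul_one,
    ← symm_shift Y hY, Matrix.mulVec_mulVec, ← mul_assoc]

include hAB hAs in
lemma sB_vmv_wu (X Y : Mat3) :
    sB B X (vecMulVec (Y.mulVec h) (A.mulVec h)) = h ⬝ᵥ (X * B * Y).mulVec h := by
  unfold sB
  rw [trace_mul_vecMulVec, ← symm_shift A hAs, Matrix.mulVec_mulVec, Matrix.mulVec_mulVec]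
  have e : A * (B * X * B) * Y = X * B * Y := by
    calc A * (B * X * B) * Y = (A * B) * (X * B * Y) := by noncomm_ring
      _ = X * B * Y := by rw [hAB, one_mul]
  rw [e]

include hBA hAB hAs in
lemma sB_vmv_uu (X : Mat3) : sB B X (vecMulVec (A.mulVec h) (A.mulVec h)) = h ⬝ᵥ X.mulVec h := by
  unfold sB
  rw [trace_mul_vecMulVec, Matrix.mulVec_mulVec, mul_assoc (B * X) B A, hBA, mul_one,
    ← symm_shift A hAs, Matrix.mulVec_mulVec]
  have e : A * (B * X) = X := by
    calc A * (B * X) = (A * B) * X := by noncomm_ring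
      _ = X := by rw [hAB, one_mul]
  rw [e]

lemma cross_symm (X Y : Mat3) (hX : X.IsSymm) (hY : Y.IsSymm) (hBs : B.IsSymm) :
    h ⬝ᵥ (Y * B * X).mulVec h = h ⬝ᵥ (X * B * Y).mulVec h := by
  rw [dot_transpose (Y * B * X) h]
  congr 2
  rw [Matrix.transpose_mul, Matrix.transpose_mul, hX.eq, hY.eq, hBs.eq, mul_assoc]

lemma sB_smul (X : Mat3) (c : ℝ) (Y : Mat3) : sB B X (c • Y) = c * sB B X Y := by
  unfold sB; rw [Matrix.mul_smul, Matrix.trace_smul]; rfl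

lemma sB_add (X Y Z : Mat3) : sB B X (Y + Z) = sB B X Y + sB B X Z := by
  unfold sB; rw [Matrix.mul_add, Matrix.trace_add]

lemma sB_sub (X Y Z : Mat3) : sB B X (Y - Z) = sB B X Y - sB B X Z := by
  unfold sB; rw [Matrix.mul_sub, Matrix.trace_sub]

include hBA hAB hAs in
lemma sB_MM (X Y : Mat3) (hX : X.IsSymm) (hY : Y.IsSymm) (hAinv : A⁻¹ = B) (hBs : B.IsSymm) :
    sB B X (MM A h Y) = (2 / A.det) *
      ( (h ⬝ᵥ Y.mulVec h) * (B * X).trace + (h ⬝ᵥ A.mulVec h) * sB B X Y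
        - 4 * (h ⬝ᵥ (X * B * Y).mulVec h)
        + (B * Y).trace * (2 * (h ⬝ᵥ X.mulVec h) - (h ⬝ᵥ A.mulVec h) * (B * X).trace) ) := by
  unfold MM
  rw [hAinv]
  rw [sB_smul, sB_add, sB_sub, sB_add, sB_smul, sB_smul, sB_smul, sB_smul, sB_sub,
    sB_smul, sB_smul, sB_add,
    sB_A B A hBA,
    sB_vmv_uw B A h hBA X Y hY,
    sB_vmv_wu B A h hAB hAs X Y,
    sB_vmv_uu B A h hBA hAB hAs X,
    cross_symm B h X Y hX hY hBs]
  ring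
end AlgebraPairings

section IntegralPairings
variable (f₀ : Vec3 → ℝ) (hf_smooth : ContDiff ℝ (⊤ : ℕ∞) f₀)
    (hf_supp : HasCompactSupport f₀) (hf_supp0 : (0 : Vec3) ∉ tsupport f₀)
    (hf_nonneg : ∀ p, 0 ≤ f₀ p)
    (B : Mat3) (hB : B.PosDef)

include hB in
lemma quad_pos' (p : Vec3) (hp : p ≠ 0) : 0 < quadForm B p := by
  have := hB.dotProduct_mulVec_pos hp; simpa [quadForm] using this

include hB in
lemma contAt_invsqrt (n : ℕ) (p : Vec3) (hp : p ≠ 0) :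
    ContinuousAt (fun p => (Real.sqrt (quadForm B p))⁻¹ ^ n) p := by
  have hq : 0 < quadForm B p := quad_pos' B hB p hp
  have h1 : ContinuousAt (fun p => Real.sqrt (quadForm B p)) p :=
    (Real.continuous_sqrt.comp (quadForm_continuous B)).continuousAt
  exact ((h1.inv₀ (by positivity)).pow n)

include hf_smooth hf_supp hf_supp0 hB in
lemma integrable_shape (n : ℕ) (H : Vec3 → ℝ) (hH : Continuous H) (i j : Fin 3) :
    Integrable (fun p : Vec3 =>
      ((Real.sqrt (quadForm B p))⁻¹ ^ n * H p) * (p i * p j * f₀ p)) := by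
  have := integrable_weight f₀ hf_smooth hf_supp hf_supp0
    (G := fun p => ((Real.sqrt (quadForm B p))⁻¹ ^ n * H p) * (p i * p j))
    (fun p hp => (((contAt_invsqrt B hB n p hp).mul hH.continuousAt).mul
      (by fun_prop)))
  refine this.congr (Filter.Eventually.of_forall fun p => by ring)

include hf_smooth hf_supp hf_supp0 hB in
lemma psi_pair (X : Mat3) :
    sB B X (PsiM f₀ B) = (4 * π) * Real.sqrt B.det *
      ∫ p : Vec3, (Real.sqrt (quadForm B p))⁻¹ * (quadForm X (B.mulVec p) * f₀ p) := by
  have hBs : B.IsSymm := aux_posdef_isSymm hB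
  have hInt : ∀ i j : Fin 3, Integrable
      (fun p : Vec3 => (Real.sqrt (quadForm B p))⁻¹ * (p i * p j * f₀ p)) := by
    intro i j
    have := integrable_shape f₀ hf_smooth hf_supp hf_supp0 B hB 1 (fun _ => 1)
      continuous_const i j
    refine this.congr (Filter.Eventually.of_forall fun p => by ring)
  have key := trace_int f₀ (fun p => (Real.sqrt (quadForm B p))⁻¹) hInt (B * X * B)
    ((4 * π) * Real.sqrt B.det)
  have e1 : sB B X (PsiM f₀ B) = (B * X * B * (Matrix.of fun i j =>
      (4 * π) * Real.sqrt B.det * ∫ p : Vec3,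
        (Real.sqrt (quadForm B p))⁻¹ * (p i * p j * f₀ p))).trace := rfl
  rw [e1, key]
  congr 1
  refine MeasureTheory.integral_congr_ae (Filter.Eventually.of_forall fun p => ?_)
  have e2 : p ⬝ᵥ (B * X * B).mulVec p = quadForm X (B.mulVec p) := by
    rw [← Matrix.mulVec_mulVec, ← Matrix.mulVec_mulVec, symm_shift B hBs, quadForm]
  dsimp only
  rw [e2]

include hf_smooth hf_supp hf_supp0 hB in
lemma chi_pair (X Y : Mat3) :
    sB B X (chiM f₀ B Y) = (4 * π) * Real.sqrt B.det *
      ∫ p : Vec3, (Real.sqrt (quadForm B p))⁻¹ ^ 3 *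
        (quadForm X (B.mulVec p) * quadForm Y (B.mulVec p) * f₀ p) := by
  have hBs : B.IsSymm := aux_posdef_isSymm hB
  set G : Vec3 → ℝ := fun p => (Real.sqrt (quadForm B p))⁻¹ ^ 3 * quadForm Y (B.mulVec p)
    with hG
  have hInt : ∀ i j : Fin 3, Integrable (fun p : Vec3 => G p * (p i * p j * f₀ p)) := by
    intro i j
    exact integrable_shape f₀ hf_smooth hf_supp hf_supp0 B hB 3
      (fun p => quadForm Y (B.mulVec p))
      (by exact (quadForm_continuous Y).comp (by unfold Matrix.mulVec dotProduct; fun_prop)) i j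
  have key := trace_int f₀ G hInt (B * X * B) ((4 * π) * Real.sqrt B.det)
  have e1 : sB B X (chiM f₀ B Y) = (B * X * B * (Matrix.of fun i j =>
      (4 * π) * Real.sqrt B.det * ∫ p : Vec3, G p * (p i * p j * f₀ p))).trace := by
    unfold sB chiM
    congr 2
    funext i j
    dsimp only [Matrix.of_apply]
    refine congrArg (fun r => (4 * π) * Real.sqrt B.det * r) ?_
    refine MeasureTheory.integral_congr_ae (Filter.Eventually.of_forall fun p => ?_)
    rw [hG]; dsimp only; ring
  rw [e1, key]
  congr 1
  refine MeasureTheory.integral_congr_ae (Filter.Eventually.of_forall fun p => ?_)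
  have e2 : p ⬝ᵥ (B * X * B).mulVec p = quadForm X (B.mulVec p) := by
    rw [← Matrix.mulVec_mulVec, ← Matrix.mulVec_mulVec, symm_shift B hBs, quadForm]
  dsimp only
  rw [hG, e2]
  ring

include hf_smooth hf_supp hf_supp0 hB in
lemma chi_symm (X Y : Mat3) :
    sB B X (chiM f₀ B Y) = sB B Y (chiM f₀ B X) := by
  rw [chi_pair f₀ hf_smooth hf_supp hf_supp0 B hB X Y,
    chi_pair f₀ hf_smooth hf_supp hf_supp0 B hB Y X]
  congr 1
  refine MeasureTheory.integral_congr_ae (Filter.Eventually.of_forall fun p => ?_)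
  ring

include hf_smooth hf_supp hf_supp0 hf_nonneg hB in
lemma chi_bound (Y : Mat3) (hY : Y.IsSymm) :
    sB B Y (chiM f₀ B Y) ≤ sB B (Y * B * Y) (PsiM f₀ B) := by
  have hBs : B.IsSymm := aux_posdef_isSymm hB
  rw [chi_pair f₀ hf_smooth hf_supp hf_supp0 B hB Y Y,
    psi_pair f₀ hf_smooth hf_supp hf_supp0 B hB (Y * B * Y)]
  have hc : (0:ℝ) ≤ (4 * π) * Real.sqrt B.det := by positivity
  refine mul_le_mul_of_nonneg_left ?_ hc
  have hint1 : Integrable (fun p : Vec3 => (Real.sqrt (quadForm B p))⁻¹ ^ 3 *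
      (quadForm Y (B.mulVec p) * quadForm Y (B.mulVec p) * f₀ p)) := by
    have := integrable_weight f₀ hf_smooth hf_supp hf_supp0
      (G := fun p => (Real.sqrt (quadForm B p))⁻¹ ^ 3 *
        (quadForm Y (B.mulVec p) * quadForm Y (B.mulVec p)))
      (fun p hp => (contAt_invsqrt B hB 3 p hp).mul
        (by exact (((quadForm_continuous Y).comp (by unfold Matrix.mulVec dotProduct; fun_prop)).mul
          ((quadForm_continuous Y).comp (by unfold Matrix.mulVec dotProduct; fun_prop))).continuousAt))
    exact this.congr (Filter.Eventually.of_forall fun p => by ring)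
  have hint2 : Integrable (fun p : Vec3 => (Real.sqrt (quadForm B p))⁻¹ *
      (quadForm (Y * B * Y) (B.mulVec p) * f₀ p)) := by
    have := integrable_weight f₀ hf_smooth hf_supp hf_supp0
      (G := fun p => (Real.sqrt (quadForm B p))⁻¹ *
        (quadForm (Y * B * Y) (B.mulVec p)))
      (fun p hp => (contAt_invsqrt B hB 1 p hp).congr (by
          refine Filter.Eventually.of_forall fun q => by simp [pow_one]) |>.mul
        (by exact ((quadForm_continuous (Y*B*Y)).comp (by unfold Matrix.mulVec dotProduct; fun_prop)).continuousAt))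
    exact this.congr (Filter.Eventually.of_forall fun p => by ring)
  refine MeasureTheory.integral_mono hint1 hint2 fun p => ?_
  dsimp only
  by_cases hf : f₀ p = 0
  · simp [hf]
  · have hp : p ≠ 0 := by
      intro h0
      exact hf_supp0 (h0 ▸ subset_tsupport f₀ (by simpa [Function.mem_support] using hf))
    have hq : 0 < quadForm B p := quad_pos' B hB p hp
    have hs : 0 < Real.sqrt (quadForm B p) := Real.sqrt_pos.mpr hq
    set q := quadForm B p with hqdef
    set a := quadForm Y (B.mulVec p) with hadef
    set b := quadForm (Y * B * Y) (B.mulVec p) with hbdef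
    have hCS : a ^ 2 ≤ q * b := by
      have key := cs_form B hB p (Y.mulVec (B.mulVec p))
      have ea : p ⬝ᵥ B.mulVec (Y.mulVec (B.mulVec p)) = a := by
        rw [symm_shift B hBs, hadef, quadForm]
      have eb : (Y.mulVec (B.mulVec p)) ⬝ᵥ B.mulVec (Y.mulVec (B.mulVec p)) = b := by
        rw [hbdef, quadForm, ← Matrix.mulVec_mulVec, ← Matrix.mulVec_mulVec,
          symm_shift Y hY]
      rw [ea, eb] at key
      exact key
    have h3 : (Real.sqrt q)⁻¹ ^ 3 * q = (Real.sqrt q)⁻¹ := by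
      rw [show ((Real.sqrt q)⁻¹) ^ 3 = (Real.sqrt q)⁻¹ * ((Real.sqrt q)⁻¹ * (Real.sqrt q)⁻¹) by ring,
        ← mul_inv, Real.mul_self_sqrt hq.le]
      field_simp
    have hfpos : 0 ≤ f₀ p := hf_nonneg p
    calc (Real.sqrt q)⁻¹ ^ 3 * (a * a * f₀ p)
        = ((Real.sqrt q)⁻¹ ^ 3 * a ^ 2) * f₀ p := by ring
      _ ≤ ((Real.sqrt q)⁻¹ ^ 3 * (q * b)) * f₀ p := by
          refine mul_le_mul_of_nonneg_right (mul_le_mul_of_nonneg_left hCS (by positivity)) hfpos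
      _ = (Real.sqrt q)⁻¹ * (b * f₀ p) := by
          rw [show (Real.sqrt q)⁻¹ ^ 3 * (q * b) = ((Real.sqrt q)⁻¹ ^ 3 * q) * b by ring, h3]
          ring
end IntegralPairings

lemma nonneg_of_mul (a X : ℝ) (ha : 0 < a) (h : 0 ≤ a * X) : 0 ≤ X := by
  by_contra hneg
  push_neg at hneg
  have := mul_neg_of_pos_of_neg ha hneg
  linarith

lemma core_scalar (a α n t b r c ψv m' : ℝ) (ha : 0 < a) (hα0 : 0 ≤ α) (hα : α < a/6)
    (hn : 0 ≤ n) (hr : 0 ≤ r) (hb2 : b^2 ≤ α*r)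
    (hc : 2*c ≤ n - (2/a)*(α*n - 2*r))
    (hψ : 2*ψv = t - (2/a)*(α*t - 2*b))
    (hm : m' = (2/a)*(b*t + α*n - 4*r + t*(2*b - α*t))) :
    0 ≤ n - c + t*ψv - m' := by
  have ha' : a ≠ 0 := ne_of_gt ha
  have hψ' : ψv = (t - (2/a)*(α*t - 2*b))/2 := by linarith
  have key : 2*a*(n - c + t*ψv - m') =
      2*a*n - 2*a*c + (a*t^2 - 2*α*t^2 + 4*b*t) + (-12*b*t - 4*α*n + 16*r + 4*α*t^2) := by
    rw [hψ', hm]; field_simp; ring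
  have hc' : 2*a*c ≤ a*n - 2*α*n + 4*r := by
    have e : a*(n - (2/a)*(α*n - 2*r)) = a*n - 2*α*n + 4*r := by field_simp; ring
    nlinarith [mul_le_mul_of_nonneg_left hc ha.le]
  have step' : 0 ≤ a*(a*n - 2*α*n + (a+2*α)*t^2 - 8*b*t + 12*r) := by
    nlinarith [sq_nonneg (a*t - 8*b), hb2,
      mul_nonneg (mul_nonneg hn ha.le) (by linarith : (0:ℝ) ≤ a - 2*α),
      mul_nonneg hr (by linarith : (0:ℝ) ≤ 12*a - 32*α),
      mul_nonneg (mul_nonneg hα0 ha.le) (sq_nonneg t),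
      mul_nonneg (mul_pos ha ha).le (sq_nonneg t)]
  have step : 0 ≤ a*n - 2*α*n + (a+2*α)*t^2 - 8*b*t + 12*r :=
    nonneg_of_mul a _ ha step'
  have main : 0 ≤ 2*a*(n - c + t*ψv - m') := by
    rw [key]; linarith
  exact nonneg_of_mul (2*a) _ (by linarith) main

/-- for 1 < γ < 2 and hᵀAh < (det A)/6, all complex eigenvalues of the
Fuchsian matrix N_γ of the rescaled Einstein–Boltzmann system have real part > 1. -/
theorem boltzmann_N_eigenvalues (f₀ : Vec3 → ℝ) (h : Vec3) (γ : ℝ)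
    (hf_smooth : ContDiff ℝ (⊤ : ℕ∞) f₀) (hf_nonneg : ∀ p, 0 ≤ f₀ p)
    (hf_supp : HasCompactSupport f₀) (hf_supp0 : (0 : Vec3) ∉ tsupport f₀)
    (hf_ne : f₀ ≠ 0)
    (hγ : 1 < γ ∧ γ < 2)
    (B : Mat3) (hB : B.PosDef) (hFuchs : FuchsCond f₀ h B)
    (hsmall : h ⬝ᵥ (B⁻¹).mulVec h < (B⁻¹).det / 6) :
    ∀ (lam : ℂ) (k₁ Z₁ k₂ Z₂ : Mat3),
      k₁.IsSymm → Z₁.IsSymm → k₂.IsSymm → Z₂.IsSymm →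
      ¬ (k₁ = 0 ∧ Z₁ = 0 ∧ k₂ = 0 ∧ Z₂ = 0) →
      Ngfst γ (B⁻¹) B k₁ Z₁ = lam.re • k₁ - lam.im • k₂ →
      Ngsnd γ f₀ h (B⁻¹) B k₁ Z₁ = lam.re • Z₁ - lam.im • Z₂ →
      Ngfst γ (B⁻¹) B k₂ Z₂ = lam.im • k₁ + lam.re • k₂ →
      Ngsnd γ f₀ h (B⁻¹) B k₂ Z₂ = lam.im • Z₁ + lam.re • Z₂ →
      1 < lam.re := by
  obtain ⟨hγ1, hγ2⟩ := hγ
  have hγ0 : 0 < γ - 1 := by linarith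
  have hg : γ - 1 ≠ 0 := ne_of_gt hγ0
  have hdB : 0 < B.det := hB.det_pos
  have hBu : IsUnit B.det := hdB.ne'.isUnit
  set A := B⁻¹ with hAdef
  have hBA : B * A = 1 := Matrix.mul_nonsing_inv B hBu
  have hAB : A * B = 1 := Matrix.nonsing_inv_mul B hBu
  have hApd : A.PosDef := hB.inv
  have hAinv : A⁻¹ = B := Matrix.nonsing_inv_nonsing_inv B hBu
  have hBs : B.IsSymm := aux_posdef_isSymm hB
  have hAs : A.IsSymm := aux_posdef_isSymm hApd
  have ha : 0 < A.det := hApd.det_pos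
  have hα0 : 0 ≤ h ⬝ᵥ A.mulVec h := aux_quad_nonneg hApd h
  intro lam k₁ Z₁ k₂ Z₂ hk₁ hZ₁ hk₂ hZ₂ hne e1 e2 e3 e4
  -- clear the 1/(γ-1) prefactor
  have mkE1 : ∀ (k Z R : Mat3), Ngfst γ A B k Z = R →
      γ • k + (B*k).trace • A - (2:ℝ) • Z = (γ - 1) • R := by
    intro k Z R hE
    have h2 := congrArg (fun M : Mat3 => (γ - 1) • M) hE
    simpa only [Ngfst, smul_smul, mul_one_div, div_self hg, one_smul] using h2
  have mkE2 : ∀ (k Z R : Mat3), Ngsnd γ f₀ h A B k Z = R →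
      k - chiM f₀ B k + (B*k).trace • PsiM f₀ B - MM A h k + Z = (γ - 1) • R := by
    intro k Z R hE
    have h2 := congrArg (fun M : Mat3 => (γ - 1) • M) hE
    simpa only [Ngsnd, smul_smul, mul_one_div, div_self hg, one_smul] using h2
  have E1 := mkE1 _ _ _ e1
  have E2 := mkE2 _ _ _ e2
  have E3 := mkE1 _ _ _ e3
  have E4 := mkE2 _ _ _ e4
  -- nondegeneracy
  have hkne : ¬ (k₁ = 0 ∧ k₂ = 0) := by
    rintro ⟨h1, h2⟩
    apply hne
    refine ⟨h1, ?_, h2, ?_⟩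
    · rw [h1, h2] at E1
      simp only [smul_zero, Matrix.mul_zero, Matrix.trace_zero, zero_smul, zero_add,
        zero_sub, smul_zero, sub_zero, add_zero] at E1
      have : (2:ℝ) • Z₁ = 0 := by
        rw [show (0:Mat3) = -(0:Mat3) by simp, ← E1]; simp
      have h2' := congrArg (fun M : Mat3 => (1/(2:ℝ)) • M) this
      simpa using h2'
    · rw [h1, h2] at E3
      simp only [smul_zero, Matrix.mul_zero, Matrix.trace_zero, zero_smul, zero_add,
        zero_sub, smul_zero, sub_zero, add_zero] at E3
      have : (2:ℝ) • Z₂ = 0 := by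
        rw [show (0:Mat3) = -(0:Mat3) by simp, ← E3]; simp
      have h2' := congrArg (fun M : Mat3 => (1/(2:ℝ)) • M) this
      simpa using h2'
  -- Fuchs pairing
  have fuchsPair : ∀ X : Mat3, 2 * sB B X (PsiM f₀ B) =
      (B*X).trace - (2/A.det)*((h ⬝ᵥ A.mulVec h)*(B*X).trace - 2*(h ⬝ᵥ X.mulVec h)) := by
    intro X
    have hp := congrArg (sB B X) hFuchs
    rw [← hAdef] at hp
    simp only [sB_smul, sB_sub, sB_A B A hBA, sB_vmv_uu B A h hBA hAB hAs] at hp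
    linarith [hp]
  -- scalar pairings of the four equations
  have S1 := congrArg (sB B k₁) E1
  have S2 := congrArg (sB B k₂) E1
  have S3 := congrArg (sB B k₁) E3
  have S4 := congrArg (sB B k₂) E3
  have S5 := congrArg (sB B k₁) E2
  have S6 := congrArg (sB B k₂) E2
  have S7 := congrArg (sB B k₁) E4
  have S8 := congrArg (sB B k₂) E4
  simp only [sB_add, sB_sub, sB_smul, sB_A B A hBA] at S1 S2 S3 S4 S5 S6 S7 S8
  -- rewrite the M-pairings in S6, S7 (needed for cancellation of the imaginary part)
  rw [sB_MM B A h hBA hAB hAs k₂ k₁ hk₂ hk₁ hAinv hBs] at S6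
  rw [sB_MM B A h hBA hAB hAs k₁ k₂ hk₁ hk₂ hAinv hBs] at S7
  have hr12 : h ⬝ᵥ (k₂ * B * k₁).mulVec h = h ⬝ᵥ (k₁ * B * k₂).mulVec h :=
    cross_symm B h k₁ k₂ hk₁ hk₂ hBs
  rw [hr12] at S6
  have hn21 : sB B k₂ k₁ = sB B k₁ k₂ := sB_comm B k₂ k₁
  rw [hn21] at S2 S4 S6
  have hc21 : sB B k₂ (chiM f₀ B k₁) = sB B k₁ (chiM f₀ B k₂) :=
    (chi_symm f₀ hf_smooth hf_supp hf_supp0 B hB k₁ k₂).symm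
  rw [hc21] at S6
  -- the per-component positivity (real part of ⟨K, L₀ K⟩ ≥ 0)
  have coreX : ∀ X : Mat3, X.IsSymm →
      0 ≤ sB B X X - sB B X (chiM f₀ B X) + (B*X).trace * sB B X (PsiM f₀ B)
          - sB B X (MM A h X) := by
    intro X hX
    have hXBX : (X * B * X).IsSymm := by
      unfold Matrix.IsSymm
      rw [Matrix.transpose_mul, Matrix.transpose_mul, hBs.eq, hX.eq, mul_assoc]
    have htr : (B * (X * B * X)).trace = sB B X X := by
      unfold sB
      rw [show B * (X * B * X) = B * X * B * X by noncomm_ring]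
    have hrX : 0 ≤ h ⬝ᵥ (X * B * X).mulVec h := by
      have e : h ⬝ᵥ (X * B * X).mulVec h = (X.mulVec h) ⬝ᵥ B.mulVec (X.mulVec h) := by
        rw [← Matrix.mulVec_mulVec, ← Matrix.mulVec_mulVec, symm_shift X hX]
      rw [e]
      exact aux_quad_nonneg hB _
    have hb2 : (h ⬝ᵥ X.mulVec h)^2 ≤ (h ⬝ᵥ A.mulVec h) * (h ⬝ᵥ (X * B * X).mulVec h) := by
      have key := cs_form B hB (A.mulVec h) (X.mulVec h)
      have e1' : A.mulVec h ⬝ᵥ B.mulVec (X.mulVec h) = h ⬝ᵥ X.mulVec h := by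
        rw [← symm_shift A hAs, Matrix.mulVec_mulVec, Matrix.mulVec_mulVec, hAB, Matrix.one_mul]
      have e2' : A.mulVec h ⬝ᵥ B.mulVec (A.mulVec h) = h ⬝ᵥ A.mulVec h := by
        rw [← symm_shift A hAs, Matrix.mulVec_mulVec, Matrix.mulVec_mulVec, hAB, Matrix.one_mul]
      have e3' : (X.mulVec h) ⬝ᵥ B.mulVec (X.mulVec h) = h ⬝ᵥ (X * B * X).mulVec h := by
        rw [← symm_shift X hX, Matrix.mulVec_mulVec, Matrix.mulVec_mulVec]
      rw [e1', e2', e3'] at key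
      exact key
    have hcb : 2 * sB B X (chiM f₀ B X) ≤ sB B X X
        - (2/A.det)*((h ⬝ᵥ A.mulVec h) * sB B X X - 2*(h ⬝ᵥ (X * B * X).mulVec h)) := by
      have h1 := chi_bound f₀ hf_smooth hf_supp hf_supp0 hf_nonneg B hB X hX
      have h2 := fuchsPair (X * B * X)
      rw [htr] at h2
      linarith [h1, h2]
    exact core_scalar A.det (h ⬝ᵥ A.mulVec h) (sB B X X) ((B*X).trace) (h ⬝ᵥ X.mulVec h)
      (h ⬝ᵥ (X * B * X).mulVec h) (sB B X (chiM f₀ B X)) (sB B X (PsiM f₀ B))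
      (sB B X (MM A h X)) ha hα0 hsmall (sB_self_nonneg B X hB hX) hrX hb2 hcb
      (fuchsPair X) (sB_MM B A h hBA hAB hAs X X hX hX hAinv hBs)
  have core1 := coreX k₁ hk₁
  have core2 := coreX k₂ hk₂
  -- positivity of the norm
  have hN1 : 0 < sB B k₁ k₁ + sB B k₂ k₂ := by
    rcases not_and_or.mp hkne with hk | hk
    · have := sB_self_pos B k₁ hB hk₁ hk
      have h2 := sB_self_nonneg B k₂ hB hk₂
      linarith
    · have := sB_self_pos B k₂ hB hk₂ hk
      have h2 := sB_self_nonneg B k₁ hB hk₁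
      linarith
  -- master equations
  have F1 : 2*(sB B k₁ Z₁ + sB B k₂ Z₂) =
      (γ - (γ-1)*lam.re)*(sB B k₁ k₁ + sB B k₂ k₂)
        + ((B*k₁).trace^2 + (B*k₂).trace^2) := by
    linear_combination -S1 - S4
  have F2 : 2*(sB B k₂ Z₁ - sB B k₁ Z₂) = (γ-1)*lam.im*(sB B k₁ k₁ + sB B k₂ k₂) := by
    linear_combination S3 - S2
  have F3 : (sB B k₁ k₁ - sB B k₁ (chiM f₀ B k₁) + (B*k₁).trace * sB B k₁ (PsiM f₀ B)
        - sB B k₁ (MM A h k₁))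
      + (sB B k₂ k₂ - sB B k₂ (chiM f₀ B k₂) + (B*k₂).trace * sB B k₂ (PsiM f₀ B)
        - sB B k₂ (MM A h k₂))
      + (sB B k₁ Z₁ + sB B k₂ Z₂)
      = (γ-1)*lam.re*(sB B k₁ Z₁ + sB B k₂ Z₂)
        - (γ-1)*lam.im*(sB B k₁ Z₂ - sB B k₂ Z₁) := by
    linear_combination S5 + S8
  have F4 : (sB B k₁ Z₂ - sB B k₂ Z₁)
      = (γ-1)*lam.im*(sB B k₁ Z₁ + sB B k₂ Z₂)
        + (γ-1)*lam.re*(sB B k₁ Z₂ - sB B k₂ Z₁) := by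
    linear_combination S7 - S6 - ((B*k₂).trace/2) * fuchsPair k₁ + ((B*k₁).trace/2) * fuchsPair k₂
  clear S1 S2 S3 S4 S5 S6 S7 S8 E1 E2 E3 E4 e1 e2 e3 e4 hFuchs mkE1 mkE2 fuchsPair coreX
  clear hne hkne hr12 hn21 hc21 hα0 ha hAinv hApd hAB hBA hsmall hf_ne hf_supp hf_supp0 hf_smooth hf_nonneg
  -- endgame
  by_contra hcon
  push_neg at hcon
  have hgre : (γ-1)*lam.re ≤ γ - 1 := by
    have := mul_le_mul_of_nonneg_left hcon hγ0.le
    linarith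
  set σ := sB B k₁ Z₁ + sB B k₂ Z₂ with hσdef
  set D := sB B k₁ Z₂ - sB B k₂ Z₁ with hDdef
  set N1 := sB B k₁ k₁ + sB B k₂ k₂ with hN1def
  set T2 := (B*k₁).trace^2 + (B*k₂).trace^2 with hT2def
  have hT2 : 0 ≤ T2 := by positivity
  clear_value σ D N1 T2
  by_cases him : lam.im = 0
  · -- real eigenvalue case
    have hP : 0 ≤ (sB B k₁ k₁ - sB B k₁ (chiM f₀ B k₁) + (B*k₁).trace * sB B k₁ (PsiM f₀ B)
        - sB B k₁ (MM A h k₁))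
      + (sB B k₂ k₂ - sB B k₂ (chiM f₀ B k₂) + (B*k₂).trace * sB B k₂ (PsiM f₀ B)
        - sB B k₂ (MM A h k₂)) := by linarith
    have h4 : 2*((sB B k₁ k₁ - sB B k₁ (chiM f₀ B k₁) + (B*k₁).trace * sB B k₁ (PsiM f₀ B)
        - sB B k₁ (MM A h k₁))
      + (sB B k₂ k₂ - sB B k₂ (chiM f₀ B k₂) + (B*k₂).trace * sB B k₂ (PsiM f₀ B)
        - sB B k₂ (MM A h k₂)))
        = ((γ-1)*lam.re - 1)*((γ - (γ-1)*lam.re)*N1 + T2) := by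
      linear_combination 2*F3 + ((γ-1)*lam.re - 1)*F1 + (-2*(γ-1)*D)*him
    have h2 : 1 ≤ γ - (γ-1)*lam.re := by linarith
    have h3 : 0 < (γ - (γ-1)*lam.re)*N1 + T2 := by
      nlinarith [mul_le_mul_of_nonneg_right h2 hN1.le]
    have h5 : ((γ-1)*lam.re - 1)*((γ - (γ-1)*lam.re)*N1 + T2) < 0 :=
      mul_neg_of_neg_of_pos (by linarith) h3
    linarith
  · -- complex eigenvalue case
    have hgim : (γ-1)*lam.im ≠ 0 := mul_ne_zero hg him
    have hD : 2*D = -((γ-1)*lam.im*N1) := by linear_combination -F2 + 2*hDdef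
    have key0 : ((γ-1)*lam.im)*(-(N1*(1 - (γ-1)*lam.re)))
        = ((γ-1)*lam.im)*((γ - (γ-1)*lam.re)*N1 + T2) := by
      linear_combination (-(1 - (γ-1)*lam.re))*hD + 2*F4 + ((γ-1)*lam.im)*F1
    have key : -(N1*(1 - (γ-1)*lam.re)) = (γ - (γ-1)*lam.re)*N1 + T2 :=
      mul_left_cancel₀ hgim key0
    have key2 : (2*((γ-1)*lam.re) - γ - 1)*N1 = T2 := by linear_combination key
    have hneg : (2*((γ-1)*lam.re) - γ - 1) < 0 := by linarith
    nlinarith [mul_neg_of_neg_of_pos hneg hN1]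
end
end

section
/- There do not exist a positive definite symmetric 3×3 real matrix A, a real number ρ₀, and a nonzero vector h ∈ ℝ³ such that (8πρ₀ / (3 (det A)^{2/3}) + (2/det A) hᵀAh − 1) · A = (4/det A) (Ah)(Ah)ᵀ. (Consequently there are no Bianchi I solutions of the Einstein equations coupled to a radiation fluid and a nonzero homogeneous source-free magnetic field with a conformal gauge singularity: the Fuchsian condition for that system would force the equation above, whose right-hand side is a nonzero matrix of rank one while the left-hand side has rank zero or three.) -/
open MeasureTheory Matrix Real Filter Topology Set Asymptotics

noncomputable section

theorem Matrix.eq_zero_or_eq_zero_of_smul_eq_smul_vecMulVec {n K : Type*} [Fintype n]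
    [DecidableEq n] [Nontrivial n] [CommRing K] [IsDomain K] {A : Matrix n n K}
    (hA : A.det ≠ 0) {c k : K} (hk : k ≠ 0) {u v : n → K}
    (h : c • A = k • vecMulVec u v) : u = 0 ∨ v = 0 := by
  -- `vecMulVec u v` is singular while `A` is not, which forces `c = 0`.
  have hc : c = 0 := by
    have hdet := congrArg det h
    rw [det_smul, det_smul, det_vecMulVec, mul_zero, mul_eq_zero] at hdet
    exact pow_eq_zero_iff Fintype.card_ne_zero |>.mp (hdet.resolve_right hA)
  rw [hc, zero_smul, eq_comm, smul_eq_zero] at h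
  exact vecMulVec_eq_zero.mp (h.resolve_left hk)

/-- no positive definite A, ρ₀ ∈ ℝ and nonzero h satisfy the radiation-fluid
Fuchsian condition; hence no Bianchi I radiation-fluid solutions with nonzero magnetic
field and a conformal gauge singularity. -/
theorem no_radiation_fluid_with_magnetic_field :
    ¬ ∃ (A : Mat3) (ρ₀ : ℝ) (h : Vec3), A.PosDef ∧ h ≠ 0 ∧
      (8 * π * ρ₀ / (3 * A.det ^ ((2:ℝ)/3)) + (2 / A.det) * (h ⬝ᵥ A.mulVec h) - 1) • A
        = (4 / A.det) • vecMulVec (A.mulVec h) (A.mulVec h) := by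
  rintro ⟨A, ρ₀, h, hA, hh, heq⟩
  have hdet : A.det ≠ 0 := hA.det_pos.ne'
  have hAh : A *ᵥ h ≠ 0 := fun h0 => hh (eq_zero_of_mulVec_eq_zero hdet h0)
  have hk : (4 : ℝ) / A.det ≠ 0 := div_ne_zero four_ne_zero hdet
  exact hAh (or_self_iff.mp (eq_zero_or_eq_zero_of_smul_eq_smul_vecMulVec hdet hk heq))
end
end
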